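/- arXiv:math/0502481 — 9 statements merged into one kernel-verified Lean document; each statement's English description precedes it below -/
import Mathlib

section
/- Let A(t) be a fanning frame and define the fundamental endomorphism F(t) = (A(t)|Ȧ(t)) · [[O, I],[O, O]] · (A(t)|Ȧ(t))^{-1}. If X(t) is a smooth curve of invertible n×n matrices, then the fundamental endomorphism of A(t)X(t) equals F(t). -/
open Matrix

noncomputable section

/-- `MDeriv A A'` says that `A'` is the entrywise derivative of the matrix curve `A`. -/
def MDeriv {m k : Type*} (A A' : ℝ → Matrix m k ℝ) : Prop :=
  ∀ (i : m) (j : k) (t : ℝ), HasDerivAt (fun s => A s i j) (A' t i j) t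

/-- The fundamental endomorphism of a fanning frame, via the explicit formula. -/
def fundEnd {n : ℕ} (A A' : ℝ → Matrix (Fin n ⊕ Fin n) (Fin n) ℝ) (t : ℝ) :
    Matrix (Fin n ⊕ Fin n) (Fin n ⊕ Fin n) ℝ :=
  fromCols (A t) (A' t) * fromBlocks 0 1 0 0 * (fromCols (A t) (A' t))⁻¹

/-- the fundamental endomorphism is unchanged when the fanning frame
`A(t)` is replaced by `A(t)X(t)` for a smooth curve of invertible matrices `X`. -/
theorem stmt2 {n : ℕ} (A A' : ℝ → Matrix (Fin n ⊕ Fin n) (Fin n) ℝ)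
    (X X' : ℝ → Matrix (Fin n) (Fin n) ℝ)
    (hA : MDeriv A A')
    (hAf : ∀ t, IsUnit (fromCols (A t) (A' t)))
    (hX : MDeriv X X') (hXu : ∀ t, IsUnit (X t)) :
    ∀ t, fundEnd (fun s => A s * X s) (fun s => A' s * X s + A s * X' s) t
        = fundEnd A A' t := by
  intro t
  have hP : IsUnit (fromBlocks (X t) (X' t) 0 (X t)) := by
    rw [isUnit_iff_isUnit_det, det_fromBlocks_zero₂₁]
    exact ((hXu t).map (Matrix.detMonoidHom)).mul ((hXu t).map (Matrix.detMonoidHom))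
  have hcol : fromCols (A t * X t) (A' t * X t + A t * X' t)
      = fromCols (A t) (A' t) * fromBlocks (X t) (X' t) 0 (X t) := by
    rw [fromCols_mul_fromBlocks]
    congr 1 <;> simp [add_comm]
  have hcomm : fromBlocks (X t) (X' t) 0 (X t) * fromBlocks (0 : Matrix (Fin n) (Fin n) ℝ) 1 0 0
      = fromBlocks 0 1 0 0 * fromBlocks (X t) (X' t) 0 (X t) := by
    simp [fromBlocks_multiply]
  simp only [fundEnd, hcol, Matrix.mul_inv_rev]
  calc fromCols (A t) (A' t) * fromBlocks (X t) (X' t) 0 (X t) * fromBlocks 0 1 0 0 *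
        ((fromBlocks (X t) (X' t) 0 (X t))⁻¹ * (fromCols (A t) (A' t))⁻¹)
      = fromCols (A t) (A' t) * (fromBlocks (X t) (X' t) 0 (X t) * fromBlocks 0 1 0 0 *
        (fromBlocks (X t) (X' t) 0 (X t))⁻¹) * (fromCols (A t) (A' t))⁻¹ := by
        simp only [Matrix.mul_assoc]
    _ = _ := by
        rw [hcomm, Matrix.mul_assoc (fromBlocks 0 1 0 0), Matrix.mul_nonsing_inv _
          ((isUnit_iff_isUnit_det _).mp hP), Matrix.mul_one]
end
end

section
/- If s is a diffeomorphism of the real line and F(t) is the fundamental endomorphism of a fanning frame A(t), then the fundamental endomorphism of the reparameterized frame A(s(t)) is F(s(t))·ṡ(t)^{-1}. -/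
open Matrix

noncomputable section

/-- under a reparameterization by a diffeomorphism `s` of the real
line, the fundamental endomorphism transforms as `F(s(t)) · ṡ(t)⁻¹`. The
reparameterized frame `A(s(t))` has derivative `ṡ(t) • Ȧ(s(t))`. -/
theorem stmt4 {n : ℕ} (A A' : ℝ → Matrix (Fin n ⊕ Fin n) (Fin n) ℝ)
    (F G : ℝ → Matrix (Fin n ⊕ Fin n) (Fin n ⊕ Fin n) ℝ)
    (s s' : ℝ → ℝ)
    (hA : MDeriv A A')
    (hAf : ∀ t, IsUnit (fromCols (A t) (A' t)))
    (hs : ∀ t, HasDerivAt s (s' t) t)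
    (hs0 : ∀ t, s' t ≠ 0)
    (hsbij : Function.Bijective s)
    (hF : ∀ t, F t * A t = 0 ∧ F t * A' t = A t)
    (hG : ∀ t, G t * A (s t) = 0 ∧ G t * (s' t • A' (s t)) = A (s t)) :
    ∀ t, G t = (s' t)⁻¹ • F (s t) := by
  intro t
  set u := s t with hu
  have hGA' : G t * A' u = (s' t)⁻¹ • A u := by
    have h := (hG t).2
    rw [Matrix.mul_smul] at h
    rw [← h, smul_smul, inv_mul_cancel₀ (hs0 t), one_smul]
  have h1 : G t * fromCols (A u) (A' u)
      = ((s' t)⁻¹ • F u) * fromCols (A u) (A' u) := by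
    rw [mul_fromCols, mul_fromCols, (hG t).1, hGA', Matrix.smul_mul,
      Matrix.smul_mul, (hF u).1, (hF u).2, smul_zero]
  exact (hAf u).mul_right_cancel h1
end
end

section
/- Let F(t) be the fundamental endomorphism of a fanning frame A(t). Then at each t the derivative Ḟ(t) is a reflection, i.e. Ḟ(t)^2 = I, and the (−1)-eigenspace of Ḟ(t) is spanned by the columns of A(t). -/
open Matrix

noncomputable section

lemma mderiv_mul {m k l : Type*} [Fintype k] {A A' : ℝ → Matrix m k ℝ}
    {B B' : ℝ → Matrix k l ℝ} (hA : MDeriv A A') (hB : MDeriv B B') :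
    MDeriv (fun s => A s * B s) (fun s => A' s * B s + A s * B' s) := by
  intro i j t
  have h : HasDerivAt (fun s => ∑ x, A s i x * B s x j)
      (∑ x, (A' t i x * B t x j + A t i x * B' t x j)) t :=
    HasDerivAt.fun_sum fun x _ => (hA i x t).mul (hB x j t)
  simpa [Matrix.mul_apply, Matrix.add_apply, Finset.sum_add_distrib] using h

/-- the derivative of the fundamental endomorphism of a fanning frame
is a reflection whose `(-1)`-eigenspace is the column span of `A(t)`. -/
theorem stmt5 {n : ℕ} (A A' A'' : ℝ → Matrix (Fin n ⊕ Fin n) (Fin n) ℝ)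
    (F F' : ℝ → Matrix (Fin n ⊕ Fin n) (Fin n ⊕ Fin n) ℝ)
    (hA : MDeriv A A') (hA' : MDeriv A' A'')
    (hAf : ∀ t, IsUnit (fromCols (A t) (A' t)))
    (hF : ∀ t, F t * A t = 0 ∧ F t * A' t = A t)
    (hF' : MDeriv F F') :
    ∀ t, F' t * F' t = 1 ∧
      Module.End.eigenspace (F' t).mulVecLin (-1) = LinearMap.range (A t).mulVecLin := by
  -- inverse facts
  have hdet : ∀ t, IsUnit (fromCols (A t) (A' t)).det := fun t =>
    (Matrix.isUnit_iff_isUnit_det _).mp (hAf t)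
  have hPinv : ∀ t, fromCols (A t) (A' t) * (fromCols (A t) (A' t))⁻¹ = 1 := fun t =>
    Matrix.mul_nonsing_inv _ (hdet t)
  have hinvP : ∀ t, (fromCols (A t) (A' t))⁻¹ * fromCols (A t) (A' t) = 1 := fun t =>
    Matrix.nonsing_inv_mul _ (hdet t)
  -- F factors through A
  have hcol : ∀ t, F t = A t *
      (Matrix.fromCols (0 : Matrix (Fin n) (Fin n) ℝ) (1 : Matrix (Fin n) (Fin n) ℝ) * (fromCols (A t) (A' t))⁻¹) := by
    intro t
    have hFP : F t * fromCols (A t) (A' t) = fromCols 0 (A t) := by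
      rw [Matrix.mul_fromCols, (hF t).1, (hF t).2]
    have h0A : Matrix.fromCols (0 : Matrix (Fin n ⊕ Fin n) (Fin n) ℝ) (A t)
        = A t * Matrix.fromCols (0 : Matrix (Fin n) (Fin n) ℝ) (1 : Matrix (Fin n) (Fin n) ℝ) := by
      rw [Matrix.mul_fromCols, Matrix.mul_zero, Matrix.mul_one]
    calc F t = F t * (fromCols (A t) (A' t) * (fromCols (A t) (A' t))⁻¹) := by
          rw [hPinv, Matrix.mul_one]
      _ = (F t * fromCols (A t) (A' t)) * (fromCols (A t) (A' t))⁻¹ := by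
          rw [Matrix.mul_assoc]
      _ = A t * (Matrix.fromCols (0 : Matrix (Fin n) (Fin n) ℝ) (1 : Matrix (Fin n) (Fin n) ℝ) * (fromCols (A t) (A' t))⁻¹) := by
          rw [hFP, h0A, Matrix.mul_assoc]
  -- F * F = 0
  have hFF : ∀ t, F t * F t = 0 := by
    intro t
    nth_rewrite 2 [hcol t]
    rw [← Matrix.mul_assoc, (hF t).1, Matrix.zero_mul]
  -- derivative identities
  have h1 : ∀ t, F' t * A t + F t * A' t = 0 := by
    intro t
    have hd := mderiv_mul hF' hA
    ext i j
    have h0 : (fun s => (F s * A s) i j) = fun _ => (0 : ℝ) := by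
      funext s; rw [(hF s).1]; rfl
    have hu := (h0 ▸ hd i j t).unique (hasDerivAt_const t 0)
    simpa using hu
  have h2 : ∀ t, F' t * A' t + F t * A'' t = A' t := by
    intro t
    have hd := mderiv_mul hF' hA'
    ext i j
    have h0 : (fun s => (F s * A' s) i j) = fun s => A s i j := by
      funext s; rw [(hF s).2]
    have hu := (h0 ▸ hd i j t).unique (hA i j t)
    simpa using hu
  have h3 : ∀ t, F' t * F t + F t * F' t = 0 := by
    intro t
    have hd := mderiv_mul hF' hF'
    ext i j
    have h0 : (fun s => (F s * F s) i j) = fun _ => (0 : ℝ) := by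
      funext s; rw [hFF s]; rfl
    have hu := (h0 ▸ hd i j t).unique (hasDerivAt_const t 0)
    simpa using hu
  intro t
  -- key algebraic facts at t
  have hF'A : F' t * A t = -(A t) := by
    have := h1 t
    rw [(hF t).2] at this
    exact eq_neg_of_add_eq_zero_left this
  have hF'F : F' t * F t = -(F t) := by
    rw [hcol t, ← Matrix.mul_assoc, hF'A, Matrix.neg_mul]
  have hFF' : F t * F' t = F t := by
    have := h3 t
    rw [hF'F] at this
    exact (neg_add_eq_zero.mp this).symm
  have hF'A' : F' t * A' t = A' t - F t * A'' t := by
    exact eq_sub_of_add_eq (h2 t)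
  have hF'FA'' : F' t * (F t * A'' t) = -(F t * A'' t) := by
    rw [← Matrix.mul_assoc, hF'F, Matrix.neg_mul]
  -- F'^2 = 1
  have hsq : F' t * F' t = 1 := by
    have hP2 : (F' t * F' t) * fromCols (A t) (A' t) = fromCols (A t) (A' t) := by
      rw [Matrix.mul_assoc, Matrix.mul_fromCols, hF'A, hF'A', Matrix.mul_fromCols,
        Matrix.mul_neg, hF'A, Matrix.mul_sub, hF'A', hF'FA'', neg_neg]
      simp
    have h := congrArg (fun M => M * (fromCols (A t) (A' t))⁻¹) hP2
    simp only [Matrix.mul_assoc] at h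
    rw [hPinv t, Matrix.mul_one] at h
    exact h
  refine ⟨hsq, ?_⟩
  -- eigenspace
  ext v
  rw [Module.End.mem_eigenspace_iff]
  constructor
  · intro hv
    rw [Matrix.mulVecLin_apply, neg_one_smul] at hv
    -- F *ᵥ v = 0
    have hFv : F t *ᵥ v = 0 := by
      have h : F t *ᵥ (F' t *ᵥ v) = F t *ᵥ (-v) := by rw [hv]
      rw [Matrix.mulVec_mulVec, hFF', Matrix.mulVec_neg] at h
      have h2 : F t *ᵥ v + F t *ᵥ v = 0 := by
        nth_rewrite 2 [h]
        simp
      have h3 : (2 : ℝ) • (F t *ᵥ v) = 0 := by rw [two_smul]; exact h2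
      simpa using smul_eq_zero.mp h3
    -- decompose v
    set P := fromCols (A t) (A' t) with hPdef
    set w := P⁻¹ *ᵥ v with hw
    have hvP : v = P *ᵥ w := by
      rw [hw, Matrix.mulVec_mulVec, hPinv t, Matrix.one_mulVec]
    have hwsum : w = Sum.elim (fun i => w (Sum.inl i)) (fun i => w (Sum.inr i)) := by
      funext i; cases i <;> rfl
    have hvdec : v = A t *ᵥ (fun i => w (Sum.inl i)) + A' t *ᵥ (fun i => w (Sum.inr i)) := by
      rw [hvP, hwsum]
      exact Matrix.fromCols_mulVec_sumElim _ _ _ _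
    -- F v = A *ᵥ w₂
    have hFv2 : A t *ᵥ (fun i => w (Sum.inr i)) = 0 := by
      have := hFv
      rw [hvdec, Matrix.mulVec_add, Matrix.mulVec_mulVec, Matrix.mulVec_mulVec,
        (hF t).1, (hF t).2] at this
      simpa using this
    -- A injective
    have hAinj : ∀ x : Fin n → ℝ, A t *ᵥ x = 0 → x = 0 := by
      intro x hx
      have hPx : P *ᵥ Sum.elim x (0 : Fin n → ℝ) = 0 := by
        rw [hPdef, Matrix.fromCols_mulVec_sumElim, hx, Matrix.mulVec_zero, add_zero]
      have : Sum.elim x (0 : Fin n → ℝ) = 0 := by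
        have := congrArg (fun u => P⁻¹ *ᵥ u) hPx
        simpa only [hPdef, Matrix.mulVec_mulVec, hinvP t, Matrix.one_mulVec, Matrix.mulVec_zero] using this
      funext i
      have := congrFun this (Sum.inl i)
      simpa using this
    have hw2 : (fun i => w (Sum.inr i)) = 0 := hAinj _ hFv2
    refine ⟨(fun i => w (Sum.inl i)), ?_⟩
    rw [Matrix.mulVecLin_apply]
    rw [hvdec, hw2, Matrix.mulVec_zero, add_zero]
  · rintro ⟨x, rfl⟩
    rw [Matrix.mulVecLin_apply, Matrix.mulVecLin_apply, Matrix.mulVec_mulVec, hF'A]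
    simp [Matrix.neg_mulVec]
end
end

section
/- Let F(t) be the fundamental endomorphism of a fanning frame A(t) and set P(t) = (I − Ḟ(t))/2. Then Ṗ(t) maps the column span ℓ(t) of A(t) into the kernel h(t) of P(t), maps h(t) into ℓ(t), and Ṗ(t)A(t) = Ȧ(t) − (1/2)F(t)Ä(t) has rank n (so Ṗ(t) maps ℓ(t) isomorphically onto h(t)). -/
open Matrix

noncomputable section

/-- Product rule for matrix curves. -/
lemma MDeriv.mul {m k l : Type*} [Fintype k] {X X' : ℝ → Matrix m k ℝ}
    {Y Y' : ℝ → Matrix k l ℝ} (hX : MDeriv X X') (hY : MDeriv Y Y') :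
    MDeriv (fun t => X t * Y t) (fun t => X' t * Y t + X t * Y' t) := by
  intro i j t
  simp only [Matrix.mul_apply, Matrix.add_apply]
  have h := HasDerivAt.fun_sum (u := Finset.univ)
    (fun c _ => (hX i c t).mul (hY c j t))
  simpa [Finset.sum_add_distrib] using h

/-- Uniqueness of the entrywise derivative. -/
lemma MDeriv.unique {m k : Type*} {X X' Y' : ℝ → Matrix m k ℝ}
    (h1 : MDeriv X X') (h2 : MDeriv X Y') : X' = Y' :=
  funext fun t => Matrix.ext fun i j => (h1 i j t).unique (h2 i j t)

lemma MDeriv.congr_fun {m k : Type*} {X Y X' : ℝ → Matrix m k ℝ}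
    (h : MDeriv X X') (he : ∀ t, X t = Y t) : MDeriv Y X' := by
  have : X = Y := funext he
  exact this ▸ h

lemma MDeriv.const {m k : Type*} (C : Matrix m k ℝ) :
    MDeriv (fun _ => C) (fun _ => 0) := by
  intro i j t
  simpa using hasDerivAt_const t (C i j)

/-- with `P(t) = (I - Ḟ(t))/2`, the derivative `Ṗ(t)` maps the column
span `ℓ(t)` of `A(t)` into the kernel `h(t)` of `P(t)` and `h(t)` into `ℓ(t)`;
moreover `Ṗ(t)A(t) = Ȧ(t) - (1/2)F(t)Ä(t)` has rank `n`, so `Ṗ(t)` maps `ℓ(t)`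
isomorphically onto `h(t)`. -/
theorem stmt6 {n : ℕ} (A A' A'' : ℝ → Matrix (Fin n ⊕ Fin n) (Fin n) ℝ)
    (F F' P P' : ℝ → Matrix (Fin n ⊕ Fin n) (Fin n ⊕ Fin n) ℝ)
    (hA : MDeriv A A') (hA' : MDeriv A' A'')
    (hAf : ∀ t, IsUnit (fromCols (A t) (A' t)))
    (hF : ∀ t, F t * A t = 0 ∧ F t * A' t = A t)
    (hF' : MDeriv F F')
    (hP : ∀ t, P t = (2⁻¹ : ℝ) • (1 - F' t))
    (hP' : MDeriv P P') :
    ∀ t,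
      Submodule.map (P' t).mulVecLin (LinearMap.range (A t).mulVecLin)
          ≤ LinearMap.ker (P t).mulVecLin ∧
      Submodule.map (P' t).mulVecLin (LinearMap.ker (P t).mulVecLin)
          ≤ LinearMap.range (A t).mulVecLin ∧
      P' t * A t = A' t - (2⁻¹ : ℝ) • (F t * A'' t) ∧
      (P' t * A t).rank = n := by
  classical
  -- cancellation from invertibility of (A | A')
  have hcancel : ∀ t (X Y : Matrix (Fin n ⊕ Fin n) (Fin n ⊕ Fin n) ℝ),
      X * A t = Y * A t → X * A' t = Y * A' t → X = Y := by
    intro t X Y h1 h2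
    have hx : X * fromCols (A t) (A' t) = Y * fromCols (A t) (A' t) := by
      rw [Matrix.mul_fromCols, Matrix.mul_fromCols, h1, h2]
    exact (hAf t).mul_right_cancel hx
  -- derivative of F*A = 0  :  F'A + FA' = 0
  have dFA : (fun t => F' t * A t + F t * A' t) = (fun _ => 0) :=
    MDeriv.unique ((hF'.mul hA).congr_fun fun t => (hF t).1)
      (MDeriv.const 0)
  have i3 : ∀ t, F' t * A t = -A t := by
    intro t
    have h := congrFun dFA t
    have : F' t * A t + A t = 0 := by rw [← (hF t).2] at h ⊢; exact h
    linear_combination (norm := noncomm_ring) this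
  -- derivative of F*A' = A : F'A' + FA'' = A'
  have dFA' : (fun t => F' t * A' t + F t * A'' t) = A' :=
    MDeriv.unique ((hF'.mul hA').congr_fun fun t => (hF t).2) hA
  have i4 : ∀ t, F' t * A' t = A' t - F t * A'' t := by
    intro t
    have h := congrFun dFA' t
    linear_combination (norm := noncomm_ring) h
  -- F*F = 0
  have iFF : ∀ t, F t * F t = 0 := by
    intro t
    refine hcancel t _ 0 ?_ ?_
    · rw [Matrix.mul_assoc, (hF t).1, Matrix.mul_zero, Matrix.zero_mul]
    · rw [Matrix.mul_assoc, (hF t).2, (hF t).1, Matrix.zero_mul]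
  -- derivative of F*F = 0 : F'F + FF' = 0
  have dFF : (fun t => F' t * F t + F t * F' t) = (fun _ => 0) :=
    MDeriv.unique ((hF'.mul hF').congr_fun fun t => iFF t) (MDeriv.const 0)
  -- F F' = F
  have iFF' : ∀ t, F t * F' t = F t := by
    intro t
    refine hcancel t _ _ ?_ ?_
    · rw [Matrix.mul_assoc, i3, Matrix.mul_neg, (hF t).1, neg_zero]
    · rw [Matrix.mul_assoc, i4, Matrix.mul_sub, (hF t).2, ← Matrix.mul_assoc,
        iFF, Matrix.zero_mul, sub_zero]
  -- F' F = -F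
  have iF'F : ∀ t, F' t * F t = -F t := by
    intro t
    have h := congrFun dFF t
    rw [iFF'] at h
    linear_combination (norm := noncomm_ring) h
  -- P A = A
  have iPA : ∀ t, P t * A t = A t := by
    intro t
    rw [hP t, Matrix.smul_mul, Matrix.sub_mul, Matrix.one_mul, i3, sub_neg_eq_add]
    rw [← two_smul ℝ (A t), smul_smul]
    norm_num
  -- P A' = ½ F A''
  have iPA' : ∀ t, P t * A' t = (2⁻¹ : ℝ) • (F t * A'' t) := by
    intro t
    rw [hP t, Matrix.smul_mul, Matrix.sub_mul, Matrix.one_mul, i4]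
    rw [sub_sub_cancel]
  -- P (F A'') = F A''
  have iPF : ∀ t, P t * (F t * A'' t) = F t * A'' t := by
    intro t
    rw [hP t, Matrix.smul_mul, Matrix.sub_mul, Matrix.one_mul, ← Matrix.mul_assoc,
      iF'F, Matrix.neg_mul, sub_neg_eq_add, ← two_smul ℝ (F t * A'' t), smul_smul]
    norm_num
  -- P P = P
  have iPP : ∀ t, P t * P t = P t := by
    intro t
    refine hcancel t _ _ ?_ ?_
    · rw [Matrix.mul_assoc, iPA, iPA]
    · rw [Matrix.mul_assoc, iPA', Matrix.mul_smul, iPF]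
  -- derivative of P*P = P : P'P + PP' = P'
  have dPP : (fun t => P' t * P t + P t * P' t) = P' :=
    MDeriv.unique ((hP'.mul hP').congr_fun fun t => iPP t) hP'
  -- derivative of P*A = A : P'A + PA' = A'
  have dPA : (fun t => P' t * A t + P t * A' t) = A' :=
    MDeriv.unique ((hP'.mul hA).congr_fun fun t => iPA t) hA
  -- P'A = A' - ½ F A''
  have iP'A : ∀ t, P' t * A t = A' t - (2⁻¹ : ℝ) • (F t * A'' t) := by
    intro t
    have h := congrFun dPA t
    rw [iPA'] at h
    linear_combination (norm := noncomm_ring) h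
  -- P (P'A) = 0
  have iPB : ∀ t, P t * (P' t * A t) = 0 := by
    intro t
    rw [iP'A, Matrix.mul_sub, iPA', Matrix.mul_smul, iPF, sub_self]
  -- F (P'A) = A
  have iFB : ∀ t, F t * (P' t * A t) = A t := by
    intro t
    rw [iP'A, Matrix.mul_sub, (hF t).2, Matrix.mul_smul, ← Matrix.mul_assoc, iFF,
      Matrix.zero_mul, smul_zero, sub_zero]
  intro t
  -- injectivity of A(t)
  have hAinj : Function.Injective (A t).mulVecLin := by
    have hMinj : Function.Injective (fromCols (A t) (A' t)).mulVec :=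
      mulVec_injective_iff_isUnit.2 (hAf t)
    intro x y hxy
    simp only [Matrix.mulVecLin_apply] at hxy
    have : fromCols (A t) (A' t) *ᵥ Sum.elim x 0 =
        fromCols (A t) (A' t) *ᵥ Sum.elim y 0 := by
      rw [fromCols_mulVec_sumElim, fromCols_mulVec_sumElim, hxy]
    have := hMinj this
    have := congrArg (fun v => v ∘ Sum.inl) this
    simpa [funext_iff] using this
  have hBinj : Function.Injective (P' t * A t).mulVecLin := by
    have hcomp : (A t).mulVecLin = (F t).mulVecLin ∘ₗ (P' t * A t).mulVecLin := by
      rw [← Matrix.mulVecLin_mul, iFB]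
    have h2 : Function.Injective (⇑(F t).mulVecLin ∘ ⇑(P' t * A t).mulVecLin) := by
      rw [← LinearMap.coe_comp, ← hcomp]; exact hAinj
    exact h2.of_comp
  have hrankA : Module.finrank ℝ (LinearMap.range (A t).mulVecLin) = n := by
    rw [LinearMap.finrank_range_of_inj hAinj, Module.finrank_pi, Fintype.card_fin]
  have hrankB : Module.finrank ℝ (LinearMap.range (P' t * A t).mulVecLin) = n := by
    rw [LinearMap.finrank_range_of_inj hBinj, Module.finrank_pi, Fintype.card_fin]
  -- range A ⊆ range P
  have hle1 : LinearMap.range (A t).mulVecLin ≤ LinearMap.range (P t).mulVecLin := by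
    rintro v ⟨x, rfl⟩
    refine ⟨(A t).mulVec x, ?_⟩
    simp only [Matrix.mulVecLin_apply]
    rw [Matrix.mulVec_mulVec, iPA]
  -- range B ⊆ ker P
  have hle2 : LinearMap.range (P' t * A t).mulVecLin ≤ LinearMap.ker (P t).mulVecLin := by
    rintro v ⟨x, rfl⟩
    simp only [LinearMap.mem_ker, Matrix.mulVecLin_apply]
    rw [Matrix.mulVec_mulVec, iPB, Matrix.zero_mulVec]
  -- finrank of ker P ≥ n, so finrank of range P ≤ n
  have hkerP : n ≤ Module.finrank ℝ (LinearMap.ker (P t).mulVecLin) := by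
    calc n = Module.finrank ℝ (LinearMap.range (P' t * A t).mulVecLin) := hrankB.symm
    _ ≤ Module.finrank ℝ (LinearMap.ker (P t).mulVecLin) := Submodule.finrank_mono hle2
  have hrn := LinearMap.finrank_range_add_finrank_ker (P t).mulVecLin
  have hdim : Module.finrank ℝ (Fin n ⊕ Fin n → ℝ) = n + n := by
    rw [Module.finrank_pi, Fintype.card_sum, Fintype.card_fin]
  have hrangeP : Module.finrank ℝ (LinearMap.range (P t).mulVecLin) ≤ n := by omega
  have hreq : LinearMap.range (A t).mulVecLin = LinearMap.range (P t).mulVecLin :=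
    Submodule.eq_of_le_of_finrank_le hle1 (by omega)
  refine ⟨?_, ?_, iP'A t, ?_⟩
  · rintro v ⟨w, ⟨x, rfl⟩, rfl⟩
    simp only [LinearMap.mem_ker, Matrix.mulVecLin_apply]
    rw [Matrix.mulVec_mulVec, Matrix.mulVec_mulVec, Matrix.mul_assoc, iPB,
      Matrix.zero_mulVec]
  · rintro v ⟨w, hw, rfl⟩
    simp only [SetLike.mem_coe, LinearMap.mem_ker, Matrix.mulVecLin_apply] at hw
    have h := congrFun dPP t
    have hvec : P' t *ᵥ w = P t *ᵥ (P' t *ᵥ w) := by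
      have h2 : (P' t * P t + P t * P' t) *ᵥ w = P' t *ᵥ w := by rw [h]
      rw [Matrix.add_mulVec, ← Matrix.mulVec_mulVec, ← Matrix.mulVec_mulVec, hw,
        Matrix.mulVec_zero, zero_add] at h2
      exact h2.symm
    rw [hreq]
    refine ⟨P' t *ᵥ w, ?_⟩
    simp only [Matrix.mulVecLin_apply]
    exact hvec.symm
  · rw [Matrix.rank, hrankB]
end
end

section
/- Let A, B, C, D be n×n matrices and M(t) a smooth curve of n×n matrices with Ṁ(t) invertible. If A + BM(t) is invertible for all t in an interval, then the matrix Schwarzian of (C + DM(t))(A + BM(t))^{-1} on that interval equals (A + BM(t)) S_t(M) (A + BM(t))^{-1}, where S_t(M) is the matrix Schwarzian of M. -/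
open Matrix

noncomputable section

open Topology

section Stmt12Aux
attribute [local instance] Matrix.linftyOpNormedRing Matrix.linftyOpNormedAlgebra
  Matrix.linftyOpNormedAddCommGroup Matrix.linftyOpNormedSpace

variable {n : ℕ}

theorem hd_of_entries {X : ℝ → Matrix (Fin n) (Fin n) ℝ} {Xd : Matrix (Fin n) (Fin n) ℝ} {t : ℝ}
    (h : ∀ i j, HasDerivAt (fun s => X s i j) (Xd i j) t) :
    HasDerivAt X Xd t := by
  have key : ∀ (Y : Matrix (Fin n) (Fin n) ℝ),
      Y = ∑ i, ∑ j, Y i j • single i j (1:ℝ) := by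
    intro Y
    conv_lhs => rw [matrix_eq_sum_single Y]
    simp [smul_single]
  rw [funext fun s => key (X s), key Xd]
  exact HasDerivAt.fun_sum fun i _ => HasDerivAt.fun_sum fun j _ => (h i j).smul_const _

theorem hd_inv {X : ℝ → Matrix (Fin n) (Fin n) ℝ} {Xd : Matrix (Fin n) (Fin n) ℝ} {t : ℝ}
    (h : HasDerivAt X Xd t) (hu : IsUnit (X t)) :
    HasDerivAt (fun s => (X s)⁻¹) (-((X t)⁻¹ * Xd * (X t)⁻¹)) t := by
  obtain ⟨u, hu'⟩ := hu
  have h1 : HasFDerivAt Ring.inverse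
      (-ContinuousLinearMap.mulLeftRight ℝ (Matrix (Fin n) (Fin n) ℝ) ↑u⁻¹ ↑u⁻¹) (X t) := by
    rw [← hu']; exact hasFDerivAt_ringInverse u
  have h2 := h1.comp_hasDerivAt t h
  have h3 : (↑u⁻¹ : Matrix (Fin n) (Fin n) ℝ) = (X t)⁻¹ := by
    rw [← hu', Matrix.coe_units_inv]
  simp only [Function.comp_def, ← nonsing_inv_eq_ringInverse,
    ContinuousLinearMap.neg_apply, ContinuousLinearMap.mulLeftRight_apply, h3] at h2
  convert h2 using 1 <;> rfl

theorem isUnit_inv' {X : Matrix (Fin n) (Fin n) ℝ} (h : IsUnit X) : IsUnit X⁻¹ := by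
  have hd := (Matrix.isUnit_iff_isUnit_det X).mp h
  exact ⟨⟨X⁻¹, X, Matrix.nonsing_inv_mul X hd, Matrix.mul_nonsing_inv X hd⟩, rfl⟩


theorem alg1 {R : Type*} [Ring R] (p q e e' m1 m1' m2 w : R)
    (hpq : p * q = 1) (hee : e' * e = 1) (hmm : m1' * m1 = 1) :
    (p * (m1' * e')) * (((0 - (e * m1 * q) * w) * m1 + e * m2) * q
        + (e * m1) * (-(q * (w * m1) * q)))
      = p * (m1' * m2) * q - w * m1 * q - w * m1 * q := by
  have ce : ∀ x : R, e' * (e * x) = x := fun x => by rw [← mul_assoc, hee, one_mul]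
  have cm : ∀ x : R, m1' * (m1 * x) = x := fun x => by rw [← mul_assoc, hmm, one_mul]
  have cp : ∀ x : R, p * (q * x) = x := fun x => by rw [← mul_assoc, hpq, one_mul]
  simp only [zero_sub, neg_mul, mul_neg, neg_neg, mul_add, add_mul, mul_sub, sub_mul,
    mul_one, one_mul, mul_assoc, ce, cm, cp, hpq, hee, hmm]
  abel

theorem alg2 {R : Type*} [Ring R] [Algebra ℝ R] (p q u v w z : R)
    (hpq : p * q = 1) (hqp : q * p = 1) (hwu : w * u = z) :
    (((w * u + p * v) * q + (p * u) * (-(q * w * q)))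
        - (z * q + w * (-(q * w * q))) - (z * q + w * (-(q * w * q))))
      - (2⁻¹ : ℝ) • ((p * u * q - w * q - w * q) * (p * u * q - w * q - w * q))
      = p * (v - (2⁻¹ : ℝ) • (u * u)) * q := by
  have cq : ∀ x : R, q * (p * x) = x := fun x => by rw [← mul_assoc, hqp, one_mul]
  rw [← hwu]
  simp only [neg_mul, mul_neg, neg_neg, mul_add, add_mul, mul_sub, sub_mul,
    smul_sub, smul_add, smul_neg, mul_smul_comm, smul_mul_assoc,
    mul_one, one_mul, mul_assoc, cq, hpq, hqp]
  module

/-- transformation of the matrix Schwarzian under matrix linear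
fractional transformations: on an interval where `A + B M(t)` is invertible, the
matrix Schwarzian of `G(t) = (C + D M(t))(A + B M(t))⁻¹` equals
`(A + B M(t)) S_t(M) (A + B M(t))⁻¹`. -/
theorem stmt12 {n : ℕ} (a b : ℝ) (A B C D : Matrix (Fin n) (Fin n) ℝ)
    (M M' M'' NM NM' G G' G'' NG NG' : ℝ → Matrix (Fin n) (Fin n) ℝ)
    (hM : ∀ i j, ∀ t ∈ Set.Ioo a b, HasDerivAt (fun s => M s i j) (M' t i j) t)
    (hM' : ∀ i j, ∀ t ∈ Set.Ioo a b, HasDerivAt (fun s => M' s i j) (M'' t i j) t)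
    (hMu : ∀ t ∈ Set.Ioo a b, IsUnit (M' t))
    (hNM : ∀ t ∈ Set.Ioo a b, NM t = (M' t)⁻¹ * M'' t)
    (hNM' : ∀ i j, ∀ t ∈ Set.Ioo a b, HasDerivAt (fun s => NM s i j) (NM' t i j) t)
    (hAB : ∀ t ∈ Set.Ioo a b, IsUnit (A + B * M t))
    (hG : ∀ t ∈ Set.Ioo a b, G t = (C + D * M t) * (A + B * M t)⁻¹)
    (hGd : ∀ i j, ∀ t ∈ Set.Ioo a b, HasDerivAt (fun s => G s i j) (G' t i j) t)
    (hGd' : ∀ i j, ∀ t ∈ Set.Ioo a b, HasDerivAt (fun s => G' s i j) (G'' t i j) t)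
    (hGu : ∀ t ∈ Set.Ioo a b, IsUnit (G' t))
    (hNG : ∀ t ∈ Set.Ioo a b, NG t = (G' t)⁻¹ * G'' t)
    (hNG' : ∀ i j, ∀ t ∈ Set.Ioo a b, HasDerivAt (fun s => NG s i j) (NG' t i j) t) :
    ∀ t ∈ Set.Ioo a b,
      NG' t - (2⁻¹ : ℝ) • (NG t * NG t)
        = (A + B * M t) * (NM' t - (2⁻¹ : ℝ) • (NM t * NM t)) * (A + B * M t)⁻¹ := by
  set P : ℝ → Matrix (Fin n) (Fin n) ℝ := fun s => A + B * M s with hP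
  have hmem : ∀ {s : ℝ}, s ∈ Set.Ioo a b → Set.Ioo a b ∈ 𝓝 s :=
    fun hs => isOpen_Ioo.mem_nhds hs
  have dM : ∀ s ∈ Set.Ioo a b, HasDerivAt M (M' s) s :=
    fun s hs => hd_of_entries (fun i j => hM i j s hs)
  have dM' : ∀ s ∈ Set.Ioo a b, HasDerivAt M' (M'' s) s :=
    fun s hs => hd_of_entries (fun i j => hM' i j s hs)
  have dNM : ∀ s ∈ Set.Ioo a b, HasDerivAt NM (NM' s) s :=
    fun s hs => hd_of_entries (fun i j => hNM' i j s hs)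
  have dG : ∀ s ∈ Set.Ioo a b, HasDerivAt G (G' s) s :=
    fun s hs => hd_of_entries (fun i j => hGd i j s hs)
  have dG' : ∀ s ∈ Set.Ioo a b, HasDerivAt G' (G'' s) s :=
    fun s hs => hd_of_entries (fun i j => hGd' i j s hs)
  have dNG : ∀ s ∈ Set.Ioo a b, HasDerivAt NG (NG' s) s :=
    fun s hs => hd_of_entries (fun i j => hNG' i j s hs)
  have dP : ∀ s ∈ Set.Ioo a b, HasDerivAt P (B * M' s) s :=
    fun s hs => ((dM s hs).const_mul B).const_add A
  have hPdet : ∀ s ∈ Set.Ioo a b, IsUnit (P s).det :=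
    fun s hs => (Matrix.isUnit_iff_isUnit_det _).mp (hAB s hs)
  have hM'det : ∀ s ∈ Set.Ioo a b, IsUnit (M' s).det :=
    fun s hs => (Matrix.isUnit_iff_isUnit_det _).mp (hMu s hs)
  have dPinv : ∀ s ∈ Set.Ioo a b,
      HasDerivAt (fun r => (P r)⁻¹) (-((P s)⁻¹ * (B * M' s) * (P s)⁻¹)) s :=
    fun s hs => hd_inv (dP s hs) (hAB s hs)
  -- formula for G'
  have hG'f : ∀ s ∈ Set.Ioo a b, G' s = (D - G s * B) * M' s * (P s)⁻¹ := by
    intro s hs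
    have d1 : HasDerivAt (fun r => (C + D * M r) * (P r)⁻¹)
        ((D * M' s) * (P s)⁻¹ + (C + D * M s) * (-((P s)⁻¹ * (B * M' s) * (P s)⁻¹))) s :=
      (((dM s hs).const_mul D).const_add C).mul (dPinv s hs)
    have d2 := d1.congr_of_eventuallyEq
      (Filter.eventuallyEq_of_mem (hmem hs) (fun r hr => hG r hr))
    have h0 := (dG s hs).unique d2
    rw [h0, hG s hs]
    noncomm_ring
  -- formula for G''
  have hG''f : ∀ s ∈ Set.Ioo a b, G'' s =
      ((0 - G' s * B) * M' s + (D - G s * B) * M'' s) * (P s)⁻¹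
        + ((D - G s * B) * M' s) * (-((P s)⁻¹ * (B * M' s) * (P s)⁻¹)) := by
    intro s hs
    have d0 : HasDerivAt (fun r => D - G r * B) (0 - G' s * B) s :=
      (hasDerivAt_const s D).sub ((dG s hs).mul_const B)
    have d1 := (d0.mul (dM' s hs)).mul (dPinv s hs)
    have d2 := d1.congr_of_eventuallyEq
      (Filter.eventuallyEq_of_mem (hmem hs) (fun r hr => hG'f r hr))
    exact (dG' s hs).unique d2
  -- formula for NG
  have hNGf : ∀ s ∈ Set.Ioo a b, NG s =
      P s * NM s * (P s)⁻¹ - B * M' s * (P s)⁻¹ - B * M' s * (P s)⁻¹ := by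
    intro s hs
    have hEm : G' s * P s = (D - G s * B) * M' s := by
      rw [hG'f s hs, mul_assoc ((D - G s * B) * M' s),
        Matrix.nonsing_inv_mul _ (hPdet s hs), mul_one]
    have hE : (D - G s * B) = G' s * P s * (M' s)⁻¹ := by
      rw [hEm, mul_assoc, Matrix.mul_nonsing_inv _ (hM'det s hs), mul_one]
    have hEu : IsUnit (D - G s * B) := by
      rw [hE]; exact ((hGu s hs).mul (hAB s hs)).mul (isUnit_inv' (hMu s hs))
    have hEdet := (Matrix.isUnit_iff_isUnit_det _).mp hEu
    have hG'inv : (G' s)⁻¹ = P s * ((M' s)⁻¹ * (D - G s * B)⁻¹) := by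
      rw [hG'f s hs, Matrix.mul_inv_rev, Matrix.mul_inv_rev,
        Matrix.nonsing_inv_nonsing_inv _ (hPdet s hs)]
    have ce : ∀ X : Matrix (Fin n) (Fin n) ℝ, (D - G s * B)⁻¹ * ((D - G s * B) * X) = X :=
      fun X => by rw [← mul_assoc, Matrix.nonsing_inv_mul _ hEdet, one_mul]
    have cm : ∀ X : Matrix (Fin n) (Fin n) ℝ, (M' s)⁻¹ * (M' s * X) = X :=
      fun X => by rw [← mul_assoc, Matrix.nonsing_inv_mul _ (hM'det s hs), one_mul]
    have cp : ∀ X : Matrix (Fin n) (Fin n) ℝ, P s * ((P s)⁻¹ * X) = X :=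
      fun X => by rw [← mul_assoc, Matrix.mul_nonsing_inv _ (hPdet s hs), one_mul]
    have cq : ∀ X : Matrix (Fin n) (Fin n) ℝ, (P s)⁻¹ * (P s * X) = X :=
      fun X => by rw [← mul_assoc, Matrix.nonsing_inv_mul _ (hPdet s hs), one_mul]
    have hqp : (P s)⁻¹ * P s = 1 := Matrix.nonsing_inv_mul _ (hPdet s hs)
    have hpq : P s * (P s)⁻¹ = 1 := Matrix.mul_nonsing_inv _ (hPdet s hs)
    have hmm : (M' s)⁻¹ * M' s = 1 := Matrix.nonsing_inv_mul _ (hM'det s hs)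
    have hee : (D - G s * B)⁻¹ * (D - G s * B) = 1 := Matrix.nonsing_inv_mul _ hEdet
    rw [hNG s hs, hG''f s hs, hG'inv, hG'f s hs, hNM s hs]
    exact alg1 _ _ _ _ _ _ _ _ hpq hee hmm
  -- final computation at t
  intro t ht
  have hqp : (P t)⁻¹ * P t = 1 := Matrix.nonsing_inv_mul _ (hPdet t ht)
  have hpq : P t * (P t)⁻¹ = 1 := Matrix.mul_nonsing_inv _ (hPdet t ht)
  have hwu : (B * M' t) * NM t = B * M'' t := by
    rw [hNM t ht, mul_assoc, ← mul_assoc (M' t),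
      Matrix.mul_nonsing_inv _ (hM'det t ht), one_mul]
  have d1 := (dP t ht).mul (dNM t ht)
  have d2 := d1.mul (dPinv t ht)
  have d3 := ((dM' t ht).const_mul B).mul (dPinv t ht)
  have d4 := (d2.sub d3).sub d3
  have d5 := d4.congr_of_eventuallyEq
    (Filter.eventuallyEq_of_mem (hmem ht) (fun r hr => hNGf r hr))
  have hNG'v := (dNG t ht).unique d5
  rw [hNG'v, hNGf t ht]
  exact alg2 (P t) ((P t)⁻¹) (NM t) (NM' t) (B * M' t) (B * M'' t) hpq hqp hwu

end Stmt12Aux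
end
end

section
/- Two fanning curves of n-dimensional subspaces of ℝ^{2n} are congruent under GL(2n,ℝ) if and only if the Schwarzians of any two of their normal frames are conjugate by a constant invertible n×n matrix. -/
open Matrix

noncomputable section

set_option linter.unusedSectionVars false
set_option linter.unusedVariables false
set_option maxHeartbeats 2000000

namespace Stmt14Aux

attribute [local instance] Matrix.normedAddCommGroup Matrix.normedSpace

variable {m k l : Type*} [Fintype m] [Fintype k] [Fintype l] [DecidableEq m] [DecidableEq k]
  [DecidableEq l]

theorem hasDerivAt_matrix {A : ℝ → Matrix m k ℝ} {A' : Matrix m k ℝ} {t : ℝ} :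
    HasDerivAt A A' t ↔ ∀ i j, HasDerivAt (fun s => A s i j) (A' i j) t :=
  ⟨fun h i j => hasDerivAt_pi.mp (hasDerivAt_pi.mp h i) j,
   fun h => hasDerivAt_pi.mpr fun i => hasDerivAt_pi.mpr fun j => h i j⟩

theorem MDeriv.mul {A A' : ℝ → Matrix m k ℝ} {X X' : ℝ → Matrix k l ℝ}
    (hA : MDeriv A A') (hX : MDeriv X X') :
    MDeriv (fun t => A t * X t) (fun t => A' t * X t + A t * X' t) := by
  intro i j t
  simp only [Matrix.mul_apply, Matrix.add_apply]
  have : HasDerivAt (fun s => ∑ c, A s i c * X s c j)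
      (∑ c, (A' t i c * X t c j + A t i c * X' t c j)) t :=
    HasDerivAt.fun_sum fun c _ => (hA i c t).mul (hX c j t)
  simpa [Finset.sum_add_distrib] using this

theorem MDeriv.add {A A' B B' : ℝ → Matrix m k ℝ} (hA : MDeriv A A') (hB : MDeriv B B') :
    MDeriv (fun t => A t + B t) (fun t => A' t + B' t) := by
  intro i j t
  simpa [Matrix.add_apply] using (hA i j t).fun_add (hB i j t)

theorem MDeriv.const (M : Matrix m k ℝ) : MDeriv (fun _ => M) (fun _ => 0) := by
  intro i j t
  simpa using hasDerivAt_const t (M i j)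

theorem MDeriv.const_mul (T : Matrix m k ℝ) {X X' : ℝ → Matrix k l ℝ} (hX : MDeriv X X') :
    MDeriv (fun t => T * X t) (fun t => T * X' t) := by
  have := MDeriv.mul (MDeriv.const T) hX
  simpa using this

theorem MDeriv.mul_const {A A' : ℝ → Matrix m k ℝ} (hA : MDeriv A A') (X : Matrix k l ℝ) :
    MDeriv (fun t => A t * X) (fun t => A' t * X) := by
  have := MDeriv.mul hA (MDeriv.const X)
  simpa using this

theorem MDeriv.unique {A A₁ A₂ : ℝ → Matrix m k ℝ} (h1 : MDeriv A A₁) (h2 : MDeriv A A₂) :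
    A₁ = A₂ := by
  funext t
  ext i j
  exact (h1 i j t).unique (h2 i j t)

theorem differentiable_det {F : ℝ → Matrix m m ℝ}
    (h : ∀ i j, Differentiable ℝ fun t => F t i j) :
    Differentiable ℝ fun t => (F t).det := by
  have : (fun t => (F t).det)
      = fun t => ∑ σ : Equiv.Perm m, ((Equiv.Perm.sign σ : ℤ) : ℝ) * ∏ i, F t (σ i) i := by
    funext t
    simp [Matrix.det_apply, Units.smul_def, zsmul_eq_mul]
  rw [this]
  exact Differentiable.fun_sum fun σ _ =>
    (differentiable_const _).mul (Differentiable.fun_finset_prod fun i _ => h (σ i) i)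

theorem differentiable_entry_mul {M : ℝ → Matrix m k ℝ} {K : ℝ → Matrix k l ℝ}
    (hM : ∀ i j, Differentiable ℝ fun t => M t i j)
    (hK : ∀ i j, Differentiable ℝ fun t => K t i j) :
    ∀ i j, Differentiable ℝ fun t => (M t * K t) i j := by
  intro i j
  simp only [Matrix.mul_apply]
  exact Differentiable.fun_sum fun c _ => (hM i c).mul (hK c j)

theorem differentiable_adjugate {F : ℝ → Matrix m m ℝ}
    (h : ∀ i j, Differentiable ℝ fun t => F t i j) :
    ∀ i j, Differentiable ℝ fun t => (F t).adjugate i j := by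
  intro i j
  simp only [Matrix.adjugate_apply]
  apply differentiable_det
  intro i' j'
  have he : (fun t => (F t).updateRow j (Pi.single i 1) i' j')
      = fun t => if i' = j then (Pi.single i (1:ℝ) : m → ℝ) j' else F t i' j' := by
    funext t; rw [Matrix.updateRow_apply]
  rw [he]
  by_cases hij : i' = j <;> simp [hij, h i' j']

theorem differentiable_inv {F : ℝ → Matrix m m ℝ}
    (h : ∀ i j, Differentiable ℝ fun t => F t i j) (hF : ∀ t, IsUnit (F t)) :
    ∀ i j, Differentiable ℝ fun t => (F t)⁻¹ i j := by
  intro i j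
  have hdet : ∀ t, (F t).det ≠ 0 := fun t =>
    isUnit_iff_ne_zero.mp ((Matrix.isUnit_iff_isUnit_det _).mp (hF t))
  have : (fun t => (F t)⁻¹ i j) = fun t => ((F t).det)⁻¹ * (F t).adjugate i j := by
    funext t
    rw [Matrix.inv_def, Matrix.smul_apply, Ring.inverse_eq_inv', smul_eq_mul]
  rw [this]
  exact ((differentiable_det h).inv hdet).mul (differentiable_adjugate h i j)

theorem norm_mul_le_card (M : Matrix m k ℝ) (P : Matrix k l ℝ) :
    ‖M * P‖ ≤ (Fintype.card k : ℝ) * (‖M‖ * ‖P‖) := by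
  have h0 : (0:ℝ) ≤ (Fintype.card k : ℝ) * (‖M‖ * ‖P‖) := by positivity
  rw [Matrix.norm_le_iff h0]
  intro i j
  rw [Matrix.mul_apply]
  calc ‖∑ c, M i c * P c j‖ ≤ ∑ c, ‖M i c * P c j‖ := norm_sum_le _ _
    _ ≤ ∑ _c : k, ‖M‖ * ‖P‖ := Finset.sum_le_sum fun c _ => by
        rw [norm_mul]
        exact mul_le_mul (Matrix.norm_entry_le_entrywise_sup_norm M)
          (Matrix.norm_entry_le_entrywise_sup_norm P) (norm_nonneg _) (norm_nonneg _)
    _ = (Fintype.card k : ℝ) * (‖M‖ * ‖P‖) := by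
        simp [Finset.sum_const, Finset.card_univ, nsmul_eq_mul]

theorem ode_unique {n : ℕ} (S : ℝ → Matrix (Fin n) (Fin n) ℝ)
    (hSc : ∀ i j, Continuous fun t => S t i j)
    (D D' D'' B B' B'' : ℝ → Matrix (Fin n ⊕ Fin n) (Fin n) ℝ)
    (hD : MDeriv D D') (hD' : MDeriv D' D'')
    (hB : MDeriv B B') (hB' : MDeriv B' B'')
    (hDS : ∀ t, D'' t = -((2⁻¹ : ℝ) • (D t * S t)))
    (hBS : ∀ t, B'' t = -((2⁻¹ : ℝ) • (B t * S t)))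
    (h0 : D 0 = B 0) (h0' : D' 0 = B' 0) : ∀ t, D t = B t := by
  intro τ
  set a : ℝ := min τ 0 - 1 with ha
  set b : ℝ := max τ 0 + 1 with hb
  have ha0 : a < 0 := by
    have : min τ 0 ≤ 0 := min_le_right _ _
    simp only [ha]; linarith
  have hb0 : 0 < b := by
    have : (0:ℝ) ≤ max τ 0 := le_max_right _ _
    simp only [hb]; linarith
  have hab : a ≤ b := le_of_lt (lt_trans ha0 hb0)
  have hτmem : τ ∈ Set.Icc a b := by
    constructor
    · have : min τ 0 ≤ τ := min_le_left _ _
      simp only [ha]; linarith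
    · have : τ ≤ max τ 0 := le_max_left _ _
      simp only [hb]; linarith
  set c : ℝ → ℝ := fun t => max a (min t b) with hcdef
  have hcmem : ∀ t, c t ∈ Set.Icc a b :=
    fun t => ⟨le_max_left _ _, max_le hab (min_le_right _ _)⟩
  have hceq : ∀ t ∈ Set.Icc a b, c t = t := by
    intro t ht
    simp only [hcdef]
    rw [min_eq_left ht.2, max_eq_right ht.1]
  have hScont : Continuous S := continuous_pi fun i => continuous_pi fun j => hSc i j
  obtain ⟨u₀, _, hu₀⟩ := isCompact_Icc.exists_isMaxOn (Set.nonempty_Icc.mpr hab)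
    (hScont.norm.continuousOn : ContinuousOn (fun u => ‖S u‖) (Set.Icc a b))
  set R : ℝ := ‖S u₀‖ with hRdef
  have hR0 : 0 ≤ R := norm_nonneg _
  have hR : ∀ t, ‖S (c t)‖ ≤ R := fun t => hu₀ (hcmem t)
  set K₀ : ℝ := max 1 ((n : ℝ) * R) with hK₀
  have hK₀0 : (0:ℝ) ≤ K₀ := le_trans zero_le_one (le_max_left _ _)
  set K : NNReal := Real.toNNReal K₀ with hK
  have hKcoe : (K : ℝ) = K₀ := Real.coe_toNNReal _ hK₀0
  set E := (Matrix (Fin n ⊕ Fin n) (Fin n) ℝ) × (Matrix (Fin n ⊕ Fin n) (Fin n) ℝ) with hE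
  set v : ℝ → E → E := fun t p => (p.2, -((2⁻¹ : ℝ) • (p.1 * S (c t)))) with hv
  have key : ∀ (M : Matrix (Fin n ⊕ Fin n) (Fin n) ℝ) (t : ℝ),
      ‖-((2⁻¹:ℝ) • (M * S (c t)))‖ ≤ K₀ * ‖M‖ := by
    intro M t
    rw [norm_neg, norm_smul]
    have h1 : ‖M * S (c t)‖ ≤ (n : ℝ) * (‖M‖ * ‖S (c t)‖) := by
      simpa using norm_mul_le_card M (S (c t))
    have h2 : ‖M * S (c t)‖ ≤ (n : ℝ) * (‖M‖ * R) := by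
      refine h1.trans ?_
      have : ‖M‖ * ‖S (c t)‖ ≤ ‖M‖ * R := mul_le_mul_of_nonneg_left (hR t) (norm_nonneg _)
      exact mul_le_mul_of_nonneg_left this (by positivity)
    have hhalf : ‖(2⁻¹:ℝ)‖ ≤ 1 := by
      rw [Real.norm_eq_abs, abs_of_nonneg (by norm_num : (0:ℝ) ≤ 2⁻¹)]
      norm_num
    calc ‖(2⁻¹:ℝ)‖ * ‖M * S (c t)‖ ≤ 1 * ((n:ℝ) * (‖M‖ * R)) :=
          mul_le_mul hhalf h2 (norm_nonneg _) zero_le_one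
      _ = ((n:ℝ) * R) * ‖M‖ := by ring
      _ ≤ K₀ * ‖M‖ := mul_le_mul_of_nonneg_right (le_max_right _ _) (norm_nonneg _)
  have hlip : ∀ t, LipschitzOnWith K (v t) Set.univ := by
    intro t
    apply LipschitzWith.lipschitzOnWith
    apply LipschitzWith.of_dist_le_mul
    intro p q
    rw [dist_eq_norm, dist_eq_norm, hKcoe]
    have hsub : v t p - v t q = (p.2 - q.2, -((2⁻¹:ℝ) • ((p.1 - q.1) * S (c t)))) := by
      have h2 : -((2⁻¹:ℝ) • (p.1 * S (c t))) - -((2⁻¹:ℝ) • (q.1 * S (c t)))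
          = -((2⁻¹:ℝ) • ((p.1 - q.1) * S (c t))) := by
        rw [Matrix.sub_mul, smul_sub]
        abel
      calc v t p - v t q
          = (p.2 - q.2, -((2⁻¹:ℝ) • (p.1 * S (c t))) - -((2⁻¹:ℝ) • (q.1 * S (c t)))) := rfl
        _ = (p.2 - q.2, -((2⁻¹:ℝ) • ((p.1 - q.1) * S (c t)))) := by rw [h2]
    rw [hsub]
    rw [Prod.norm_def]
    apply max_le
    · have h1 : ‖p.2 - q.2‖ ≤ ‖p - q‖ := by
        rw [Prod.norm_def]; exact le_max_right _ _
      have h2 : (1:ℝ) ≤ K₀ := le_max_left _ _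
      nlinarith [norm_nonneg (p - q)]
    · have h1 : ‖p.1 - q.1‖ ≤ ‖p - q‖ := by
        rw [Prod.norm_def]; exact le_max_left _ _
      refine (key (p.1 - q.1) t).trans ?_
      exact mul_le_mul_of_nonneg_left h1 hK₀0
  set f : ℝ → E := fun t => (D t, D' t) with hf
  set g : ℝ → E := fun t => (B t, B' t) with hg
  have hfd : ∀ t, HasDerivAt f (D' t, D'' t) t := fun t =>
    HasDerivAt.prodMk (hasDerivAt_matrix.mpr fun i j => hD i j t)
      (hasDerivAt_matrix.mpr fun i j => hD' i j t)
  have hgd : ∀ t, HasDerivAt g (B' t, B'' t) t := fun t =>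
    HasDerivAt.prodMk (hasDerivAt_matrix.mpr fun i j => hB i j t)
      (hasDerivAt_matrix.mpr fun i j => hB' i j t)
  have hfc : ContinuousOn f (Set.Icc a b) :=
    (continuous_iff_continuousAt.mpr fun t => (hfd t).continuousAt).continuousOn
  have hgc : ContinuousOn g (Set.Icc a b) :=
    (continuous_iff_continuousAt.mpr fun t => (hgd t).continuousAt).continuousOn
  have hf' : ∀ t ∈ Set.Ioo a b, HasDerivAt f (v t (f t)) t := by
    intro t ht
    have : v t (f t) = (D' t, D'' t) := by
      simp only [hv, hf, hceq t (Set.mem_Icc_of_Ioo ht)]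
      rw [← hDS t]
    rw [this]; exact hfd t
  have hg' : ∀ t ∈ Set.Ioo a b, HasDerivAt g (v t (g t)) t := by
    intro t ht
    have : v t (g t) = (B' t, B'' t) := by
      simp only [hv, hg, hceq t (Set.mem_Icc_of_Ioo ht)]
      rw [← hBS t]
    rw [this]; exact hgd t
  have heq0 : f 0 = g 0 := by
    simp only [hf, hg]
    rw [h0, h0']
  have := ODE_solution_unique_of_mem_Icc (fun t _ => hlip t) ⟨ha0, hb0⟩ hfc hf'
    (fun _ _ => Set.mem_univ _) hgc hg' (fun _ _ => Set.mem_univ _) heq0 hτmem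
  exact congrArg Prod.fst this

end Stmt14Aux

open Stmt14Aux

/-- two fanning curves (presented by normal frames `A`, `B` with
Schwarzians `SA`, `SB`, so that `Ä + (1/2) A SA = 0` and `B̈ + (1/2) B SB = 0`)
are congruent under `GL(2n, ℝ)` iff their Schwarzians are conjugate by a constant
invertible `n × n` matrix. -/
theorem stmt14 {n : ℕ} (A A' A'' B B' B'' : ℝ → Matrix (Fin n ⊕ Fin n) (Fin n) ℝ)
    (SA SB : ℝ → Matrix (Fin n) (Fin n) ℝ)
    (hA : MDeriv A A') (hA' : MDeriv A' A'')
    (hB : MDeriv B B') (hB' : MDeriv B' B'')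
    (hAf : ∀ t, IsUnit (fromCols (A t) (A' t)))
    (hBf : ∀ t, IsUnit (fromCols (B t) (B' t)))
    (hSA : ∀ t, A'' t + (2⁻¹ : ℝ) • (A t * SA t) = 0)
    (hSB : ∀ t, B'' t + (2⁻¹ : ℝ) • (B t * SB t) = 0)
    (hSAc : ∀ i j, Continuous fun t => SA t i j)
    (hSBc : ∀ i j, Continuous fun t => SB t i j) :
    (∃ T : Matrix (Fin n ⊕ Fin n) (Fin n ⊕ Fin n) ℝ, IsUnit T ∧
        ∀ t, LinearMap.range (B t).mulVecLin
          = Submodule.map T.mulVecLin (LinearMap.range (A t).mulVecLin)) ↔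
      (∃ X : Matrix (Fin n) (Fin n) ℝ, IsUnit X ∧ ∀ t, SB t = X⁻¹ * SA t * X) := by
  constructor
  · rintro ⟨T, hTu, hT⟩
    set C : ℝ → Matrix (Fin n ⊕ Fin n) (Fin n) ℝ := fun t => T * A t with hCdef
    set C' : ℝ → Matrix (Fin n ⊕ Fin n) (Fin n) ℝ := fun t => T * A' t with hC'def
    set C'' : ℝ → Matrix (Fin n ⊕ Fin n) (Fin n) ℝ := fun t => T * A'' t with hC''def
    have hCd : MDeriv C C' := MDeriv.const_mul T hA
    have hCd' : MDeriv C' C'' := MDeriv.const_mul T hA'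
    have hFu : ∀ t, IsUnit (fromCols (C t) (C' t)) := by
      intro t
      have h1 : fromCols (C t) (C' t) = T * fromCols (A t) (A' t) := by
        rw [Matrix.mul_fromCols]
      rw [h1]
      exact hTu.mul (hAf t)
    have hdetF : ∀ t, IsUnit (fromCols (C t) (C' t)).det :=
      fun t => (Matrix.isUnit_iff_isUnit_det _).mp (hFu t)
    set N : ℝ → Matrix (Fin n ⊕ Fin n) (Fin n ⊕ Fin n) ℝ :=
      fun t => (fromCols (C t) (C' t))⁻¹ with hNdef
    have hNF : ∀ t, N t * fromCols (C t) (C' t) = 1 :=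
      fun t => Matrix.nonsing_inv_mul _ (hdetF t)
    have hFN : ∀ t, fromCols (C t) (C' t) * N t = 1 :=
      fun t => Matrix.mul_nonsing_inv _ (hdetF t)
    have hCe : ∀ i j, Differentiable ℝ fun t => C t i j :=
      fun i j t => (hCd i j t).differentiableAt
    have hC'e : ∀ i j, Differentiable ℝ fun t => C' t i j :=
      fun i j t => (hCd' i j t).differentiableAt
    have hFe : ∀ i j, Differentiable ℝ fun t => fromCols (C t) (C' t) i j := by
      intro i j
      cases j with
      | inl j => exact hCe i j
      | inr j => exact hC'e i j
    have hNe : ∀ i j, Differentiable ℝ fun t => N t i j := differentiable_inv hFe hFu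
    have hBe : ∀ i j, Differentiable ℝ fun t => B t i j :=
      fun i j t => (hB i j t).differentiableAt
    have hB'e : ∀ i j, Differentiable ℝ fun t => B' t i j :=
      fun i j t => (hB' i j t).differentiableAt
    set X : ℝ → Matrix (Fin n) (Fin n) ℝ := fun t => toRows₁ (N t * B t) with hXdef
    set Z : ℝ → Matrix (Fin n) (Fin n) ℝ := fun t => toRows₂ (N t * B t) with hZdef
    have hdecomp : ∀ t, C t * X t + C' t * Z t = B t := by
      intro t
      calc C t * X t + C' t * Z t
          = fromCols (C t) (C' t) * fromRows (X t) (Z t) :=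
            (fromCols_mul_fromRows _ _ _ _).symm
        _ = fromCols (C t) (C' t) * (N t * B t) := by
            rw [hXdef, hZdef]
            rw [Matrix.fromRows_toRows]
        _ = (fromCols (C t) (C' t) * N t) * B t := by rw [Matrix.mul_assoc]
        _ = B t := by rw [hFN t, Matrix.one_mul]
    have hrange : ∀ t, LinearMap.range (B t).mulVecLin = LinearMap.range (C t).mulVecLin := by
      intro t
      rw [hT t, hCdef, Matrix.mulVecLin_mul, LinearMap.range_comp]
    have hZ0 : ∀ t, Z t = 0 := by
      intro t
      have hinjF : Function.Injective (fromCols (C t) (C' t)).mulVec :=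
        Matrix.mulVec_injective_iff_isUnit.mpr (hFu t)
      have key : ∀ u : Fin n → ℝ, Z t *ᵥ u = 0 := by
        intro u
        have h1 : (B t).mulVecLin u ∈ LinearMap.range (C t).mulVecLin := by
          rw [← hrange t]
          exact LinearMap.mem_range_self _ u
        obtain ⟨w, hw⟩ := h1
        have h2 : fromCols (C t) (C' t) *ᵥ (Sum.elim (X t *ᵥ u - w) (Z t *ᵥ u))
            = fromCols (C t) (C' t) *ᵥ 0 := by
          rw [Matrix.mulVec_zero, fromCols_mulVec_sumElim]
          have h3 : C t *ᵥ (X t *ᵥ u) + C' t *ᵥ (Z t *ᵥ u) = B t *ᵥ u := by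
            rw [Matrix.mulVec_mulVec, Matrix.mulVec_mulVec, ← Matrix.add_mulVec, hdecomp t]
          have h4 : C t *ᵥ (X t *ᵥ u - w) = C t *ᵥ (X t *ᵥ u) - C t *ᵥ w :=
            Matrix.mulVec_sub _ _ _
          rw [h4]
          have h5 : (C t).mulVecLin w = C t *ᵥ w := rfl
          have h6 : (B t).mulVecLin u = B t *ᵥ u := rfl
          rw [h5, h6] at hw
          rw [← hw] at h3
          calc C t *ᵥ (X t *ᵥ u) - C t *ᵥ w + C' t *ᵥ (Z t *ᵥ u)
              = (C t *ᵥ (X t *ᵥ u) + C' t *ᵥ (Z t *ᵥ u)) - C t *ᵥ w := by abel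
            _ = 0 := by rw [h3]; abel
        have h7 := hinjF h2
        funext x
        exact congrFun h7 (Sum.inr x)
      ext i j
      have h8 := congrFun (key (Pi.single j 1)) i
      rw [Matrix.mulVec_single_one] at h8
      simpa using h8
    have hBX : ∀ t, B t = C t * X t := by
      intro t
      rw [← hdecomp t, hZ0 t, Matrix.mul_zero, add_zero]
    have hXe : ∀ i j, Differentiable ℝ fun t => X t i j := by
      intro i j
      exact differentiable_entry_mul hNe hBe (Sum.inl i) j
    set X' : ℝ → Matrix (Fin n) (Fin n) ℝ :=
      fun t => Matrix.of fun i j => deriv (fun s => X s i j) t with hX'def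
    have hXd : MDeriv X X' := fun i j t => (hXe i j t).hasDerivAt
    have hB'eq : B' = fun t => C' t * X t + C t * X' t := by
      have h1 : MDeriv (fun t => C t * X t) (fun t => C' t * X t + C t * X' t) :=
        MDeriv.mul hCd hXd
      have h2 : MDeriv (fun t => C t * X t) B' := by
        have hfun : B = fun t => C t * X t := funext hBX
        rw [← hfun]
        exact hB
      exact MDeriv.unique h2 h1
    have hX'eq : X' = fun t => toRows₁ (N t * B' t) := by
      funext t
      have h1 : fromCols (C t) (C' t) * fromRows (X' t) (X t) = B' t := by
        rw [fromCols_mul_fromRows, congrFun hB'eq t]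
        abel
      have h2 : fromRows (X' t) (X t) = N t * B' t := by
        calc fromRows (X' t) (X t)
            = (N t * fromCols (C t) (C' t)) * fromRows (X' t) (X t) := by
              rw [hNF t, Matrix.one_mul]
          _ = N t * (fromCols (C t) (C' t) * fromRows (X' t) (X t)) := by
              rw [Matrix.mul_assoc]
          _ = N t * B' t := by rw [h1]
      rw [← h2, Matrix.toRows₁_fromRows]
    have hX'e : ∀ i j, Differentiable ℝ fun t => X' t i j := by
      intro i j
      rw [hX'eq]
      exact differentiable_entry_mul hNe hB'e (Sum.inl i) j
    set X'' : ℝ → Matrix (Fin n) (Fin n) ℝ :=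
      fun t => Matrix.of fun i j => deriv (fun s => X' s i j) t with hX''def
    have hX'd : MDeriv X' X'' := fun i j t => (hX'e i j t).hasDerivAt
    have hB''eq : B'' = fun t => (C'' t * X t + C' t * X' t) + (C' t * X' t + C t * X'' t) := by
      have h1 : MDeriv (fun t => C' t * X t + C t * X' t)
          (fun t => (C'' t * X t + C' t * X' t) + (C' t * X' t + C t * X'' t)) :=
        MDeriv.add (MDeriv.mul hCd' hXd) (MDeriv.mul hCd hX'd)
      have h2 : MDeriv (fun t => C' t * X t + C t * X' t) B'' := by
        rw [← hB'eq]
        exact hB'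
      exact MDeriv.unique h2 h1
    have eC'' : ∀ t, C'' t * X t = -((2⁻¹:ℝ) • (C t * (SA t * X t))) := by
      intro t
      have e2 : A'' t = -((2⁻¹:ℝ) • (A t * SA t)) := eq_neg_of_add_eq_zero_left (hSA t)
      calc C'' t * X t = T * A'' t * X t := rfl
        _ = T * -((2⁻¹:ℝ) • (A t * SA t)) * X t := by rw [e2]
        _ = -((2⁻¹:ℝ) • (T * (A t * SA t))) * X t := by rw [Matrix.mul_neg, Matrix.mul_smul]
        _ = -((2⁻¹:ℝ) • (T * (A t * SA t) * X t)) := by rw [Matrix.neg_mul, Matrix.smul_mul]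
        _ = -((2⁻¹:ℝ) • (C t * (SA t * X t))) := by
            rw [← Matrix.mul_assoc, Matrix.mul_assoc (T * A t)]
    have main : ∀ t, C t * (X'' t + (2⁻¹:ℝ) • (X t * SB t) - (2⁻¹:ℝ) • (SA t * X t))
        + C' t * (X' t + X' t) = 0 := by
      intro t
      have t2 : (2⁻¹:ℝ) • (B t * SB t) = (2⁻¹:ℝ) • (C t * (X t * SB t)) := by
        rw [hBX t, Matrix.mul_assoc]
      have t3 : B'' t + (2⁻¹:ℝ) • (B t * SB t) = 0 := hSB t
      have expand : C t * (X'' t + (2⁻¹:ℝ) • (X t * SB t) - (2⁻¹:ℝ) • (SA t * X t))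
            + C' t * (X' t + X' t)
          = (((C'' t * X t + C' t * X' t) + (C' t * X' t + C t * X'' t))
              + (2⁻¹:ℝ) • (C t * (X t * SB t)))
            - (C'' t * X t + (2⁻¹:ℝ) • (C t * (SA t * X t))) := by
        rw [Matrix.mul_sub, Matrix.mul_add, Matrix.mul_add, Matrix.mul_smul, Matrix.mul_smul]
        abel
      rw [expand, ← congrFun hB''eq t, ← t2, t3, eC'' t]
      simp
    have hfr0 : ∀ t, fromRows (X'' t + (2⁻¹:ℝ) • (X t * SB t) - (2⁻¹:ℝ) • (SA t * X t))
        (X' t + X' t) = 0 := by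
      intro t
      have h1 : fromCols (C t) (C' t) * fromRows
          (X'' t + (2⁻¹:ℝ) • (X t * SB t) - (2⁻¹:ℝ) • (SA t * X t)) (X' t + X' t) = 0 := by
        rw [fromCols_mul_fromRows]
        exact main t
      calc fromRows (X'' t + (2⁻¹:ℝ) • (X t * SB t) - (2⁻¹:ℝ) • (SA t * X t)) (X' t + X' t)
          = (N t * fromCols (C t) (C' t)) * fromRows
              (X'' t + (2⁻¹:ℝ) • (X t * SB t) - (2⁻¹:ℝ) • (SA t * X t)) (X' t + X' t) := by
            rw [hNF t, Matrix.one_mul]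
        _ = N t * (fromCols (C t) (C' t) * fromRows
              (X'' t + (2⁻¹:ℝ) • (X t * SB t) - (2⁻¹:ℝ) • (SA t * X t)) (X' t + X' t)) := by
            rw [Matrix.mul_assoc]
        _ = 0 := by rw [h1, Matrix.mul_zero]
    have hX'0 : ∀ t, X' t = 0 := by
      intro t
      have h1 : X' t + X' t = 0 := by
        have := congrArg Matrix.toRows₂ (hfr0 t)
        rw [Matrix.toRows₂_fromRows] at this
        simpa using this.trans (by ext i j; rfl)
      have h2 : (2:ℝ) • X' t = 0 := by rw [two_smul]; exact h1
      have := smul_eq_zero.mp h2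
      rcases this with h | h
      · norm_num at h
      · exact h
    have hP0 : ∀ t, X'' t + (2⁻¹:ℝ) • (X t * SB t) - (2⁻¹:ℝ) • (SA t * X t) = 0 := by
      intro t
      have := congrArg Matrix.toRows₁ (hfr0 t)
      rw [Matrix.toRows₁_fromRows] at this
      simpa using this.trans (by ext i j; rfl)
    have hX''0 : ∀ t, X'' t = 0 := by
      intro t
      ext i j
      show deriv (fun s => X' s i j) t = (0 : Matrix (Fin n) (Fin n) ℝ) i j
      have hfun : (fun s => X' s i j) = fun _ => (0:ℝ) := by
        funext s
        rw [hX'0 s]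
        simp
      rw [hfun]
      simp
    have hconst : ∀ t, X t = X 0 := by
      intro t
      ext i j
      have hd : Differentiable ℝ fun s => X s i j := hXe i j
      have h0 : ∀ s, deriv (fun s' => X s' i j) s = 0 := by
        intro s
        have hdd : deriv (fun s' => X s' i j) s = X' s i j := rfl
        rw [hdd, hX'0 s]
        simp
      exact is_const_of_deriv_eq_zero hd h0 t 0
    have hcomm : ∀ t, SA t * X 0 = X 0 * SB t := by
      intro t
      have h1 := hP0 t
      rw [hX''0 t, zero_add] at h1
      have h2 : (2⁻¹:ℝ) • (X t * SB t) = (2⁻¹:ℝ) • (SA t * X t) := sub_eq_zero.mp h1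
      have h3 : X t * SB t = SA t * X t :=
        smul_right_injective _ (by norm_num : (2⁻¹:ℝ) ≠ 0) h2
      rw [hconst t] at h3
      exact h3.symm
    have hXu : IsUnit (X 0) := by
      rw [← Matrix.mulVec_injective_iff_isUnit]
      intro u w huw
      have hBu : B 0 *ᵥ u = B 0 *ᵥ w := by
        calc B 0 *ᵥ u = C 0 *ᵥ (X 0 *ᵥ u) := by rw [hBX 0, Matrix.mulVec_mulVec]
          _ = C 0 *ᵥ (X 0 *ᵥ w) := by rw [huw]
          _ = B 0 *ᵥ w := by rw [hBX 0, Matrix.mulVec_mulVec]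
      have hGinj : Function.Injective (fromCols (B 0) (B' 0)).mulVec :=
        Matrix.mulVec_injective_iff_isUnit.mpr (hBf 0)
      have h5 : fromCols (B 0) (B' 0) *ᵥ Sum.elim u 0
          = fromCols (B 0) (B' 0) *ᵥ Sum.elim w 0 := by
        rw [fromCols_mulVec_sumElim, fromCols_mulVec_sumElim, Matrix.mulVec_zero, hBu]
      have h6 := hGinj h5
      funext x
      exact congrFun h6 (Sum.inl x)
    refine ⟨X 0, hXu, fun t => ?_⟩
    have hX0det := (Matrix.isUnit_iff_isUnit_det _).mp hXu
    calc SB t = (X 0)⁻¹ * (X 0 * SB t) := by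
          rw [← Matrix.mul_assoc, Matrix.nonsing_inv_mul _ hX0det, Matrix.one_mul]
      _ = (X 0)⁻¹ * (SA t * X 0) := by rw [← hcomm t]
      _ = (X 0)⁻¹ * SA t * X 0 := by rw [Matrix.mul_assoc]
  · rintro ⟨X, hXu, hconj⟩
    have hXdet : IsUnit X.det := (Matrix.isUnit_iff_isUnit_det _).mp hXu
    have hcomm : ∀ t, X * SB t = SA t * X := by
      intro t
      rw [hconj t, ← Matrix.mul_assoc, ← Matrix.mul_assoc,
        Matrix.mul_nonsing_inv _ hXdet, Matrix.one_mul]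
    set C : ℝ → Matrix (Fin n ⊕ Fin n) (Fin n) ℝ := fun t => A t * X with hCdef
    set C' : ℝ → Matrix (Fin n ⊕ Fin n) (Fin n) ℝ := fun t => A' t * X with hC'def
    set C'' : ℝ → Matrix (Fin n ⊕ Fin n) (Fin n) ℝ := fun t => A'' t * X with hC''def
    have hCd : MDeriv C C' := MDeriv.mul_const hA X
    have hCd' : MDeriv C' C'' := MDeriv.mul_const hA' X
    have hCode : ∀ t, C'' t = -((2⁻¹:ℝ) • (C t * SB t)) := by
      intro t
      have e2 : A'' t = -((2⁻¹:ℝ) • (A t * SA t)) := eq_neg_of_add_eq_zero_left (hSA t)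
      calc C'' t = A'' t * X := rfl
        _ = -((2⁻¹:ℝ) • (A t * SA t)) * X := by rw [e2]
        _ = -((2⁻¹:ℝ) • (A t * SA t * X)) := by rw [Matrix.neg_mul, Matrix.smul_mul]
        _ = -((2⁻¹:ℝ) • (A t * (SA t * X))) := by rw [Matrix.mul_assoc]
        _ = -((2⁻¹:ℝ) • (A t * (X * SB t))) := by rw [← hcomm t]
        _ = -((2⁻¹:ℝ) • (A t * X * SB t)) := by rw [← Matrix.mul_assoc]
    have hFu : ∀ t, IsUnit (fromCols (C t) (C' t)) := by
      intro t
      have h1 : fromCols (C t) (C' t)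
          = fromCols (A t) (A' t) * fromBlocks X 0 0 X := by
        rw [Matrix.fromCols_mul_fromBlocks]
        simp
        rfl
      rw [h1]
      refine (hAf t).mul ?_
      rw [Matrix.isUnit_iff_isUnit_det, Matrix.det_fromBlocks_zero₂₁]
      exact hXdet.mul hXdet
    have hdetF0 := (Matrix.isUnit_iff_isUnit_det _).mp (hFu 0)
    set T : Matrix (Fin n ⊕ Fin n) (Fin n ⊕ Fin n) ℝ :=
      fromCols (B 0) (B' 0) * (fromCols (C 0) (C' 0))⁻¹ with hTdef
    have hTu : IsUnit T := by
      refine (hBf 0).mul ?_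
      rw [Matrix.isUnit_iff_isUnit_det]
      exact Matrix.isUnit_nonsing_inv_det _ hdetF0
    have hDd : MDeriv (fun t => T * C t) (fun t => T * C' t) := MDeriv.const_mul T hCd
    have hDd' : MDeriv (fun t => T * C' t) (fun t => T * C'' t) := MDeriv.const_mul T hCd'
    have hDode : ∀ t, T * C'' t = -((2⁻¹:ℝ) • ((T * C t) * SB t)) := by
      intro t
      rw [hCode t, Matrix.mul_neg, Matrix.mul_smul, ← Matrix.mul_assoc]
    have hBode : ∀ t, B'' t = -((2⁻¹:ℝ) • (B t * SB t)) :=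
      fun t => eq_neg_of_add_eq_zero_left (hSB t)
    have hC0 : (fromCols (C 0) (C' 0))⁻¹ * C 0
        = fromRows (1 : Matrix (Fin n) (Fin n) ℝ) (0 : Matrix (Fin n) (Fin n) ℝ) := by
      have h1 : fromCols (C 0) (C' 0)
          * fromRows (1 : Matrix (Fin n) (Fin n) ℝ) (0 : Matrix (Fin n) (Fin n) ℝ) = C 0 := by
        rw [fromCols_mul_fromRows, Matrix.mul_one, Matrix.mul_zero, add_zero]
      calc (fromCols (C 0) (C' 0))⁻¹ * C 0
          = (fromCols (C 0) (C' 0))⁻¹ * (fromCols (C 0) (C' 0)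
              * fromRows (1 : Matrix (Fin n) (Fin n) ℝ) (0 : Matrix (Fin n) (Fin n) ℝ)) := by
            rw [h1]
        _ = ((fromCols (C 0) (C' 0))⁻¹ * fromCols (C 0) (C' 0))
              * fromRows (1 : Matrix (Fin n) (Fin n) ℝ) (0 : Matrix (Fin n) (Fin n) ℝ) := by
            rw [Matrix.mul_assoc]
        _ = fromRows (1 : Matrix (Fin n) (Fin n) ℝ) (0 : Matrix (Fin n) (Fin n) ℝ) := by
            rw [Matrix.nonsing_inv_mul _ hdetF0, Matrix.one_mul]
    have hC0' : (fromCols (C 0) (C' 0))⁻¹ * C' 0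
        = fromRows (0 : Matrix (Fin n) (Fin n) ℝ) (1 : Matrix (Fin n) (Fin n) ℝ) := by
      have h1 : fromCols (C 0) (C' 0)
          * fromRows (0 : Matrix (Fin n) (Fin n) ℝ) (1 : Matrix (Fin n) (Fin n) ℝ) = C' 0 := by
        rw [fromCols_mul_fromRows, Matrix.mul_one, Matrix.mul_zero, zero_add]
      calc (fromCols (C 0) (C' 0))⁻¹ * C' 0
          = (fromCols (C 0) (C' 0))⁻¹ * (fromCols (C 0) (C' 0)
              * fromRows (0 : Matrix (Fin n) (Fin n) ℝ) (1 : Matrix (Fin n) (Fin n) ℝ)) := by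
            rw [h1]
        _ = ((fromCols (C 0) (C' 0))⁻¹ * fromCols (C 0) (C' 0))
              * fromRows (0 : Matrix (Fin n) (Fin n) ℝ) (1 : Matrix (Fin n) (Fin n) ℝ) := by
            rw [Matrix.mul_assoc]
        _ = fromRows (0 : Matrix (Fin n) (Fin n) ℝ) (1 : Matrix (Fin n) (Fin n) ℝ) := by
            rw [Matrix.nonsing_inv_mul _ hdetF0, Matrix.one_mul]
    have hD0 : T * C 0 = B 0 := by
      rw [hTdef, Matrix.mul_assoc, hC0, fromCols_mul_fromRows,
        Matrix.mul_one, Matrix.mul_zero, add_zero]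
    have hD0' : T * C' 0 = B' 0 := by
      rw [hTdef, Matrix.mul_assoc, hC0', fromCols_mul_fromRows,
        Matrix.mul_one, Matrix.mul_zero, zero_add]
    have hall := ode_unique SB hSBc (fun t => T * C t) (fun t => T * C' t)
      (fun t => T * C'' t) B B' B'' hDd hDd' hB hB' hDode hBode hD0 hD0'
    have hXtop : LinearMap.range X.mulVecLin = ⊤ := by
      rw [LinearMap.range_eq_top]
      intro v
      refine ⟨X⁻¹ *ᵥ v, ?_⟩
      rw [Matrix.mulVecLin_apply, Matrix.mulVec_mulVec, Matrix.mul_nonsing_inv _ hXdet,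
        Matrix.one_mulVec]
    refine ⟨T, hTu, fun t => ?_⟩
    have h1 : B t = T * A t * X := by
      rw [← hall t]; exact (Matrix.mul_assoc T (A t) X).symm
    rw [h1, Matrix.mulVecLin_mul, LinearMap.range_comp_of_range_eq_top _ hXtop,
      Matrix.mulVecLin_mul, LinearMap.range_comp]
end
end

section
/- A fanning frame A(t) satisfies a constant-coefficient second-order differential equation Ä + ȦP + AQ = O (with P, Q constant n×n matrices) if and only if A(t) = exp(tX)A(0) for some linear transformation X of ℝ^{2n} such that the 2n×2n matrix (A(0) | X A(0)) is invertible. -/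
open Matrix

noncomputable section

namespace Stmt15Aux

/-- Entrywise derivative of `s ↦ exp (s • X)`, right form. -/
theorem entry_exp_hasDerivAt {ι : Type*} [Fintype ι] [DecidableEq ι]
    (X : Matrix ι ι ℝ) (t : ℝ) (i j : ι) :
    HasDerivAt (fun s : ℝ => NormedSpace.exp (s • X) i j)
      ((NormedSpace.exp (t • X) * X) i j) t := by
  letI : NormedRing (Matrix ι ι ℝ) := Matrix.linftyOpNormedRing
  letI : NormedAlgebra ℝ (Matrix ι ι ℝ) := Matrix.linftyOpNormedAlgebra
  have h := hasDerivAt_exp_smul_const (𝕂 := ℝ) X t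
  have hc : Continuous fun M : Matrix ι ι ℝ => M i j :=
    (continuous_apply j).comp (continuous_apply i)
  let l : Matrix ι ι ℝ →ₗ[ℝ] ℝ :=
    { toFun := fun M => M i j
      map_add' := fun _ _ => rfl
      map_smul' := fun _ _ => rfl }
  let φ : Matrix ι ι ℝ →L[ℝ] ℝ := { toLinearMap := l, cont := hc }
  exact φ.hasFDerivAt.comp_hasDerivAt t h

/-- Entrywise derivative of `s ↦ exp (s • X)`, left form. -/
theorem entry_exp_hasDerivAt' {ι : Type*} [Fintype ι] [DecidableEq ι]
    (X : Matrix ι ι ℝ) (t : ℝ) (i j : ι) :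
    HasDerivAt (fun s : ℝ => NormedSpace.exp (s • X) i j)
      ((X * NormedSpace.exp (t • X)) i j) t := by
  letI : NormedRing (Matrix ι ι ℝ) := Matrix.linftyOpNormedRing
  letI : NormedAlgebra ℝ (Matrix ι ι ℝ) := Matrix.linftyOpNormedAlgebra
  have h := hasDerivAt_exp_smul_const' (𝕂 := ℝ) X t
  have hc : Continuous fun M : Matrix ι ι ℝ => M i j :=
    (continuous_apply j).comp (continuous_apply i)
  let l : Matrix ι ι ℝ →ₗ[ℝ] ℝ :=
    { toFun := fun M => M i j
      map_add' := fun _ _ => rfl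
      map_smul' := fun _ _ => rfl }
  let φ : Matrix ι ι ℝ →L[ℝ] ℝ := { toLinearMap := l, cont := hc }
  exact φ.hasFDerivAt.comp_hasDerivAt t h

/-- Entrywise product rule for matrix curves. -/
theorem mderiv_mul {m k l : Type*} [Fintype k]
    {f : ℝ → Matrix m k ℝ} {f' : Matrix m k ℝ} {g : ℝ → Matrix k l ℝ} {g' : Matrix k l ℝ}
    {t : ℝ}
    (hf : ∀ i j, HasDerivAt (fun s => f s i j) (f' i j) t)
    (hg : ∀ i j, HasDerivAt (fun s => g s i j) (g' i j) t)
    (i : m) (j : l) :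
    HasDerivAt (fun s => (f s * g s) i j) ((f' * g t + f t * g') i j) t := by
  simp only [Matrix.mul_apply, Matrix.add_apply]
  rw [← Finset.sum_add_distrib]
  exact HasDerivAt.fun_sum fun c _ => (hf i c).mul (hg c j)

/-- `exp (t • X)` commutes with `X`. -/
theorem exp_comm {ι : Type*} [Fintype ι] [DecidableEq ι] (X : Matrix ι ι ℝ) (t : ℝ) :
    NormedSpace.exp (t • X) * X = X * NormedSpace.exp (t • X) := by
  ext i j
  exact (entry_exp_hasDerivAt X t i j).unique (entry_exp_hasDerivAt' X t i j)

/-- Real function with zero derivative is constant. -/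
theorem eq_of_deriv_zero {f : ℝ → ℝ} (h : ∀ t, HasDerivAt f 0 t) (t : ℝ) : f t = f 0 :=
  is_const_of_deriv_eq_zero (fun x => (h x).differentiableAt) (fun x => (h x).deriv) t 0

/-- Derivative of `s ↦ exp (s • X) * B`, entrywise. -/
theorem exp_mul_hasDerivAt {ι k : Type*} [Fintype ι] [DecidableEq ι]
    (X : Matrix ι ι ℝ) (B : Matrix ι k ℝ) (t : ℝ) (i : ι) (j : k) :
    HasDerivAt (fun s : ℝ => (NormedSpace.exp (s • X) * B) i j)
      ((X * NormedSpace.exp (t • X) * B) i j) t := by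
  have h2 := mderiv_mul (g := fun _ => B) (g' := 0) (fun a b => entry_exp_hasDerivAt' X t a b)
    (fun a b => by simpa using hasDerivAt_const t (B a b)) i j
  simpa using h2

/-- Solution of the linear ODE `F' = F C` is `F t = F 0 * exp (t • C)`. -/
theorem ode_eq {ι : Type*} [Fintype ι] [DecidableEq ι]
    {F : ℝ → Matrix ι ι ℝ} {C : Matrix ι ι ℝ}
    (hF : ∀ (i j : ι) (t : ℝ), HasDerivAt (fun s => F s i j) ((F t * C) i j) t) (t : ℝ) :
    F t = F 0 * NormedSpace.exp (t • C) := by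
  have hcm : ∀ u : ℝ, NormedSpace.exp (u • -C) * C = C * NormedSpace.exp (u • -C) := by
    intro u
    have h := exp_comm (-C) u
    rw [Matrix.mul_neg, Matrix.neg_mul] at h
    exact neg_inj.mp h
  have hG : ∀ (i j : ι) (u : ℝ),
      HasDerivAt (fun s => (F s * NormedSpace.exp (s • -C)) i j) 0 u := by
    intro i j u
    have h2 := mderiv_mul (fun a b => hF a b u)
      (fun a b => entry_exp_hasDerivAt (-C) u a b) i j
    have h0 : F u * C * NormedSpace.exp (u • -C)
        + F u * (NormedSpace.exp (u • -C) * -C) = 0 := by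
      rw [Matrix.mul_neg, hcm u, Matrix.mul_neg, ← Matrix.mul_assoc, add_neg_cancel]
    rw [h0] at h2
    simpa using h2
  have hconst : ∀ u : ℝ, F u * NormedSpace.exp (u • -C)
      = F 0 * NormedSpace.exp ((0 : ℝ) • -C) := by
    intro u
    ext i j
    exact eq_of_deriv_zero (fun v => hG i j v) u
  have hE0 : NormedSpace.exp ((0 : ℝ) • -C) = (1 : Matrix ι ι ℝ) := by
    rw [zero_smul, NormedSpace.exp_zero]
  have hc : Commute (t • -C) (t • C) :=
    (((Commute.refl C).neg_left).smul_left t).smul_right t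
  have hinv : NormedSpace.exp (t • -C) * NormedSpace.exp (t • C) = 1 := by
    rw [← Matrix.exp_add_of_commute _ _ hc, smul_neg, neg_add_cancel, NormedSpace.exp_zero]
  calc F t = F t * (NormedSpace.exp (t • -C) * NormedSpace.exp (t • C)) := by
        rw [hinv, mul_one]
    _ = F t * NormedSpace.exp (t • -C) * NormedSpace.exp (t • C) := by
        rw [Matrix.mul_assoc]
    _ = F 0 * NormedSpace.exp ((0 : ℝ) • -C) * NormedSpace.exp (t • C) := by
        rw [hconst t]
    _ = F 0 * NormedSpace.exp (t • C) := by rw [hE0, mul_one]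

end Stmt15Aux

open Stmt15Aux

/-- a fanning frame satisfies a constant-coefficient second-order
ODE `Ä + Ȧ P + A Q = 0` iff `A(t) = exp(tX) A(0)` for some `X` with
`(A(0) | X A(0))` invertible. -/
theorem stmt15 {n : ℕ} (A A' A'' : ℝ → Matrix (Fin n ⊕ Fin n) (Fin n) ℝ)
    (hA : MDeriv A A') (hA' : MDeriv A' A'')
    (hAf : ∀ t, IsUnit (fromCols (A t) (A' t))) :
    (∃ P Q : Matrix (Fin n) (Fin n) ℝ, ∀ t, A'' t + A' t * P + A t * Q = 0) ↔
      (∃ X : Matrix (Fin n ⊕ Fin n) (Fin n ⊕ Fin n) ℝ,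
        IsUnit (fromCols (A 0) (X * A 0)) ∧
        ∀ t, A t = NormedSpace.exp (t • X) * A 0) := by
  constructor
  · rintro ⟨P, Q, hPQ⟩
    have h3 : ∀ t, A'' t = -(A t * Q) - A' t * P := by
      intro t
      rw [eq_sub_iff_add_eq, eq_neg_iff_add_eq_zero]
      exact hPQ t
    set C : Matrix (Fin n ⊕ Fin n) (Fin n ⊕ Fin n) ℝ := fromBlocks 0 (-Q) 1 (-P) with hC
    have hFC : ∀ t, fromCols (A t) (A' t) * C = fromCols (A' t) (A'' t) := by
      intro t
      rw [hC, fromCols_mul_fromBlocks, h3 t]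
      simp [sub_eq_add_neg, Matrix.mul_neg]
    have hFd : ∀ (i j) (t : ℝ),
        HasDerivAt (fun s => fromCols (A s) (A' s) i j)
          ((fromCols (A t) (A' t) * C) i j) t := by
      intro i j t
      rw [hFC t]
      cases j with
      | inl j => exact hA i j t
      | inr j => exact hA' i j t
    have hFt : ∀ t, fromCols (A t) (A' t)
        = fromCols (A 0) (A' 0) * NormedSpace.exp (t • C) :=
      fun t => ode_eq hFd t
    obtain ⟨U, hU⟩ := hAf 0
    refine ⟨(U : Matrix _ _ ℝ) * C * (↑U⁻¹ : Matrix _ _ ℝ), ?_, ?_⟩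
    · have hXF : ((U : Matrix _ _ ℝ) * C * (↑U⁻¹ : Matrix _ _ ℝ)) * fromCols (A 0) (A' 0)
          = fromCols (A' 0) (A'' 0) := by
        rw [← hU, Matrix.mul_assoc, Units.inv_mul, mul_one, hU]
        exact hFC 0
      rw [mul_fromCols] at hXF
      rw [(fromCols_inj hXF).1]
      exact hAf 0
    · intro t
      have h5 := hFt t
      rw [← hU] at h5
      have h6 : NormedSpace.exp (t • ((U : Matrix _ _ ℝ) * C * (↑U⁻¹ : Matrix _ _ ℝ)))
          = (U : Matrix _ _ ℝ) * NormedSpace.exp (t • C) * (↑U⁻¹ : Matrix _ _ ℝ) := by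
        rw [show t • ((U : Matrix _ _ ℝ) * C * (↑U⁻¹ : Matrix _ _ ℝ)) = (U : Matrix _ _ ℝ) * (t • C) * (↑U⁻¹ : Matrix _ _ ℝ) by
          rw [mul_smul_comm, smul_mul_assoc]]
        exact Matrix.exp_units_conj U (t • C)
      have h7 : NormedSpace.exp (t • ((U : Matrix _ _ ℝ) * C * (↑U⁻¹ : Matrix _ _ ℝ)))
          * fromCols (A 0) (A' 0) = fromCols (A t) (A' t) := by
        rw [← hU, h6, Matrix.mul_assoc, Units.inv_mul, mul_one]
        exact h5.symm
      rw [mul_fromCols] at h7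
      exact ((fromCols_inj h7).1).symm
  · rintro ⟨X, hXU, hexp⟩
    have hA't : ∀ t, A' t = X * NormedSpace.exp (t • X) * A 0 := by
      intro t
      ext i j
      refine (hA i j t).unique ?_
      have h3 := exp_mul_hasDerivAt X (A 0) t i j
      have he : (fun s => (NormedSpace.exp (s • X) * A 0) i j) = fun s => A s i j := by
        funext s
        rw [← hexp s]
      rwa [he] at h3
    have hA'X : ∀ t, A' t = X * A t := by
      intro t
      rw [hA't t, hexp t, Matrix.mul_assoc]
    have hA''X : ∀ t, A'' t = X * A' t := by
      intro t
      ext i j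
      refine (hA' i j t).unique ?_
      have h4 := mderiv_mul (f := fun _ => X) (f' := 0) (g := A) (g' := A' t)
        (fun a b => by simpa using hasDerivAt_const t (X a b)) (fun a b => hA a b t) i j
      have he : (fun s => ((fun _ : ℝ => X) s * A s) i j) = fun s => A' s i j := by
        funext s
        rw [← hA'X s]
      rw [he] at h4
      simpa using h4
    obtain ⟨V, hV⟩ := hXU
    refine ⟨-(toRows₂ ((↑V⁻¹ : Matrix (Fin n ⊕ Fin n) (Fin n ⊕ Fin n) ℝ) * (X * (X * A 0)))), -(toRows₁ ((↑V⁻¹ : Matrix (Fin n ⊕ Fin n) (Fin n ⊕ Fin n) ℝ) * (X * (X * A 0)))), ?_⟩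
    set W : Matrix (Fin n ⊕ Fin n) (Fin n) ℝ := (↑V⁻¹ : Matrix (Fin n ⊕ Fin n) (Fin n ⊕ Fin n) ℝ) * (X * (X * A 0)) with hW
    have h8 : fromCols (A 0) (X * A 0) * W = X * (X * A 0) := by
      rw [hW, ← hV, ← Matrix.mul_assoc, Units.mul_inv, Matrix.one_mul]
    have hsolve : X * (X * A 0) = A 0 * toRows₁ W + X * A 0 * toRows₂ W := by
      calc X * (X * A 0) = fromCols (A 0) (X * A 0) * W := h8.symm
        _ = fromCols (A 0) (X * A 0) * fromRows (toRows₁ W) (toRows₂ W) := by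
            rw [fromRows_toRows]
        _ = A 0 * toRows₁ W + X * A 0 * toRows₂ W := fromCols_mul_fromRows _ _ _ _
    intro t
    have hcomm := exp_comm X t
    have hXAt : X * A t = NormedSpace.exp (t • X) * (X * A 0) := by
      rw [hexp t, ← Matrix.mul_assoc, ← hcomm, Matrix.mul_assoc]
    have hXXAt : X * (X * A t) = NormedSpace.exp (t • X) * (X * (X * A 0)) := by
      rw [hXAt, ← Matrix.mul_assoc, ← hcomm, Matrix.mul_assoc]
    rw [hA''X t, hA'X t, hXXAt, hsolve, hXAt, hexp t]
    simp only [Matrix.mul_neg, Matrix.mul_add, Matrix.mul_assoc]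
    abel
end
end

section
/- Let M(t) be a smooth curve of n×n matrices with Ṁ(t) invertible for all t. The matrix Schwarzian of M(t) is identically zero if and only if there exist n×n matrices A, B, C, D such that M(t) = (C + tD)(A + tB)^{-1}. -/
open Matrix

noncomputable section

namespace Stmt16Aux

attribute [local instance] Matrix.linftyOpNormedRing Matrix.linftyOpNormedAlgebra

abbrev Mat (n : ℕ) := Matrix (Fin n) (Fin n) ℝ

def eL (n : ℕ) : Mat n ≃ₗ[ℝ] (Fin n → Fin n → ℝ) :=
  { toFun := fun X => X, invFun := fun X => X,
    map_add' := fun _ _ => rfl, map_smul' := fun _ _ => rfl,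
    left_inv := fun _ => rfl, right_inv := fun _ => rfl }

def eC (n : ℕ) : Mat n ≃L[ℝ] (Fin n → Fin n → ℝ) := (eL n).toContinuousLinearEquiv

variable {n : ℕ}

theorem hasDerivAt_inv {B B' : ℝ → Mat n} (hB : ∀ t, HasDerivAt B (B' t) t)
    (hu : ∀ t, IsUnit (B t)) (t : ℝ) :
    HasDerivAt (fun s => (B s)⁻¹) (-((B t)⁻¹ * B' t * (B t)⁻¹)) t := by
  have h := (hasFDerivAt_ringInverse (𝕜 := ℝ) (hu t).unit).comp_hasDerivAt t (hB t)
  have e1 : (fun s => Ring.inverse (B s)) = fun s => (B s)⁻¹ :=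
    funext fun s => (Matrix.nonsing_inv_eq_ringInverse _).symm
  have e2 : (((hu t).unit⁻¹ : (Mat n)ˣ) : Mat n) = (B t)⁻¹ := by
    rw [Matrix.coe_units_inv, IsUnit.unit_spec]
  simp only [Function.comp_def, e1, ContinuousLinearMap.neg_apply,
    ContinuousLinearMap.mulLeftRight_apply, e2] at h
  exact h

theorem mderiv_iff {A A' : ℝ → Mat n} :
    MDeriv A A' ↔ ∀ t, HasDerivAt A (A' t) t := by
  constructor
  · intro h t
    have h2 : HasDerivAt (fun s => (eC n) (A s)) ((eC n) (A' t)) t := by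
      rw [hasDerivAt_pi]; intro i; rw [hasDerivAt_pi]; intro j; exact h i j t
    have h3 := (eC n).symm.hasFDerivAt.comp_hasDerivAt t h2
    exact h3
  · intro h i j t
    have h2 : HasDerivAt (fun s => (eC n) (A s)) ((eC n) (A' t)) t :=
      (eC n).hasFDerivAt.comp_hasDerivAt t (h t)
    rw [hasDerivAt_pi] at h2
    have h3 := h2 i
    rw [hasDerivAt_pi] at h3
    exact h3 j

theorem const_of_deriv_zero {f : ℝ → Mat n} (h : ∀ t, HasDerivAt f 0 t) (t : ℝ) :
    f t = f 0 :=
  is_const_of_deriv_eq_zero (fun x => (h x).differentiableAt) (fun x => (h x).deriv) t 0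

theorem forward {M M' M'' N N' : ℝ → Mat n}
    (hM : MDeriv M M') (hM' : MDeriv M' M'')
    (hMu : ∀ t, IsUnit (M' t))
    (hN : ∀ t, N t = (M' t)⁻¹ * M'' t) (hN' : MDeriv N N')
    (hS : ∀ t, N' t = (2⁻¹ : ℝ) • (N t * N t)) :
    ∃ A B C D : Mat n, (∀ t : ℝ, IsUnit (A + t • B)) ∧
      ∀ t : ℝ, M t = (C + t • D) * (A + t • B)⁻¹ := by
  rw [mderiv_iff] at hM hM' hN'
  have hMdet : ∀ t, IsUnit (M' t).det := fun t => (Matrix.isUnit_iff_isUnit_det _).mp (hMu t)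
  set R : ℝ → Mat n := fun t => (M' t)⁻¹ with hRdef
  have hR : ∀ t, HasDerivAt R (-(N t * R t)) t := by
    intro t
    simpa only [← hN t] using hasDerivAt_inv hM' hMu t
  set S : ℝ → Mat n := fun t => N t * R t with hSdef
  have hSd : ∀ t, HasDerivAt S (-((2⁻¹:ℝ) • (N t * S t))) t := by
    intro t
    refine HasDerivAt.congr_deriv ((hN' t).mul (hR t)) ?_
    symm
    rw [hS t]
    simp only [smul_mul_assoc, mul_assoc, mul_neg]
    module
  have hcd : ∀ t, HasDerivAt (fun s => N s * S s) 0 t := by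
    intro t
    refine HasDerivAt.congr_deriv ((hN' t).mul (hSd t)) ?_
    symm
    rw [hS t]
    simp only [smul_mul_assoc, mul_assoc, mul_neg, mul_smul_comm]
    module
  have hc : ∀ t, N t * S t = N 0 * S 0 := const_of_deriv_zero hcd
  set c0 : Mat n := N 0 * S 0 with hc0def
  -- S t = S 0 - (t/2) c0
  have hS2 : ∀ t, S t = S 0 - (t * 2⁻¹) • c0 := by
    intro t
    have hF : ∀ u, HasDerivAt (fun s => S s + (s * 2⁻¹) • c0) 0 u := by
      intro u
      refine HasDerivAt.congr_deriv ((hSd u).add (((hasDerivAt_id u).mul_const (2⁻¹:ℝ)).smul_const c0)) ?_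
      symm
      rw [hc u]
      module
    have h0 := const_of_deriv_zero hF t
    simp only [zero_mul, zero_smul, add_zero] at h0
    rw [← h0]
    module
  -- R t = R 0 - t S0 + (t²/4) c0
  have hR2 : ∀ t, R t = R 0 - t • S 0 + (t * t * 4⁻¹) • c0 := by
    intro t
    have hF : ∀ u, HasDerivAt (fun s => R s + s • S 0 - (s * s * 4⁻¹) • c0) 0 u := by
      intro u
      have h1 : HasDerivAt (fun s : ℝ => (s * s * 4⁻¹) • c0) (((1 * u + u * 1) * 4⁻¹) • c0) u :=
        (((hasDerivAt_id u).mul (hasDerivAt_id u)).mul_const (4⁻¹:ℝ)).smul_const c0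
      refine HasDerivAt.congr_deriv (((hR u).add ((hasDerivAt_id u).smul_const (S 0))).sub h1) ?_
      symm
      have : N u * R u = S u := rfl
      rw [this, hS2 u]
      module
    have h0 := const_of_deriv_zero hF t
    simp only [zero_mul, zero_smul, add_zero, sub_zero, mul_zero, zero_add] at h0
    rw [← h0]
    module
  set P : ℝ → Mat n := fun t => (1 : Mat n) - (t * 2⁻¹) • N 0 with hPdef
  have hPR : ∀ t, P t * (P t * R 0) = R t := by
    intro t
    rw [hR2 t]
    have hS0 : S 0 = N 0 * R 0 := rfl
    have hc0 : c0 = N 0 * (N 0 * R 0) := rfl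
    simp only [hPdef, hS0, hc0, sub_mul, mul_sub, one_mul, smul_mul_assoc, mul_smul_comm,
      smul_smul, mul_assoc]
    module
  have hPu : ∀ t, IsUnit (P t) := by
    intro t
    have hRu : IsUnit (R t).det := by
      rw [hRdef]
      exact Matrix.isUnit_nonsing_inv_det _ (hMdet t)
    rw [Matrix.isUnit_iff_isUnit_det]
    have := hPR t
    have hdet : (P t).det * ((P t).det * (R 0).det) = (R t).det := by
      rw [← Matrix.det_mul, ← Matrix.det_mul, this]
    exact isUnit_of_mul_isUnit_left (hdet ▸ hRu)
  have hPdet : ∀ t, IsUnit (P t).det := fun t => (Matrix.isUnit_iff_isUnit_det _).mp (hPu t)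
  have hM'f : ∀ t, M' t = M' 0 * ((P t)⁻¹ * (P t)⁻¹) := by
    intro t
    have h1 : M' t = (R t)⁻¹ := (Matrix.nonsing_inv_nonsing_inv _ (hMdet t)).symm
    rw [h1, ← hPR t, Matrix.mul_inv_rev, Matrix.mul_inv_rev]
    have hR0 : (R 0)⁻¹ = M' 0 := Matrix.nonsing_inv_nonsing_inv _ (hMdet 0)
    rw [hR0, mul_assoc]
  have hcomm : ∀ t, (P t)⁻¹ * N 0 = N 0 * (P t)⁻¹ := by
    intro t
    have h1 : N 0 * P t = P t * N 0 := by
      simp only [hPdef, mul_sub, sub_mul, mul_one, one_mul, mul_smul_comm, smul_mul_assoc]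
    have h2 := Matrix.mul_nonsing_inv (P t) (hPdet t)
    have h3 := Matrix.nonsing_inv_mul (P t) (hPdet t)
    calc (P t)⁻¹ * N 0 = (P t)⁻¹ * N 0 * (P t * (P t)⁻¹) := by rw [h2, mul_one]
      _ = (P t)⁻¹ * (N 0 * P t) * (P t)⁻¹ := by simp only [mul_assoc]
      _ = ((P t)⁻¹ * P t) * (N 0 * (P t)⁻¹) := by rw [h1]; simp only [mul_assoc]
      _ = N 0 * (P t)⁻¹ := by rw [h3, one_mul]
  have hPd : ∀ t, HasDerivAt P (-((2⁻¹:ℝ) • N 0)) t := by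
    intro t
    have := (((hasDerivAt_id t).mul_const (2⁻¹:ℝ)).smul_const (N 0)).const_sub (1 : Mat n)
    simp at this
    exact this
  have hPinv : ∀ t, HasDerivAt (fun s => (P s)⁻¹)
      ((2⁻¹:ℝ) • ((P t)⁻¹ * (N 0 * (P t)⁻¹))) t := by
    intro t
    have := hasDerivAt_inv hPd hPu t
    convert this using 1
    simp only [mul_neg, neg_mul, mul_smul_comm, smul_mul_assoc, neg_neg, mul_assoc]
  -- the key constant function
  have hg : ∀ t, HasDerivAt (fun s => M s - (M 0 + s • (M' 0 * (P s)⁻¹))) 0 t := by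
    intro t
    have term2 : HasDerivAt (fun s : ℝ => s • (M' 0 * (P s)⁻¹))
        (t • (M' 0 * ((2⁻¹:ℝ) • ((P t)⁻¹ * (N 0 * (P t)⁻¹)))) + (1:ℝ) • (M' 0 * (P t)⁻¹)) t :=
      (hasDerivAt_id t).smul ((hPinv t).const_mul (M' 0))
    refine HasDerivAt.congr_deriv ((hM t).sub ((hasDerivAt_const t (M 0)).add term2)) ?_
    symm
    rw [hM'f t]
    have e : (P t)⁻¹ * (N 0 * (P t)⁻¹) = N 0 * ((P t)⁻¹ * (P t)⁻¹) := by
      rw [← mul_assoc, hcomm t, mul_assoc]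
    have e2 : P t * ((P t)⁻¹ * (P t)⁻¹) = (P t)⁻¹ := by
      rw [← mul_assoc, Matrix.mul_nonsing_inv _ (hPdet t), one_mul]
    have e3 : M' 0 * (P t)⁻¹ = M' 0 * ((P t)⁻¹ * (P t)⁻¹)
        - (t * 2⁻¹) • (M' 0 * (N 0 * ((P t)⁻¹ * (P t)⁻¹))) := by
      conv_lhs => rw [← e2]
      simp only [hPdef, sub_mul, one_mul, smul_mul_assoc, mul_sub, mul_smul_comm, mul_assoc]
    rw [e]
    simp only [mul_smul_comm]
    rw [e3]
    module
  have hMt : ∀ t, M t = M 0 + t • (M' 0 * (P t)⁻¹) := by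
    intro t
    have := const_of_deriv_zero hg t
    simp only [zero_smul, add_zero, sub_self] at this
    rw [← sub_eq_zero, this]
  refine ⟨1, -((2⁻¹:ℝ) • N 0), M 0, M' 0 - (2⁻¹:ℝ) • (M 0 * N 0), ?_, ?_⟩
  · intro t
    have hQP : (1 : Mat n) + t • -((2⁻¹:ℝ) • N 0) = P t := by
      simp only [hPdef, smul_neg, smul_smul, sub_eq_add_neg]
    rw [hQP]; exact hPu t
  · intro t
    have hQP : (1 : Mat n) + t • -((2⁻¹:ℝ) • N 0) = P t := by
      simp only [hPdef, smul_neg, smul_smul, sub_eq_add_neg]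
    rw [hQP, hMt t]
    have e3 : M 0 + t • (M' 0 - (2⁻¹:ℝ) • (M 0 * N 0)) = M 0 * P t + t • M' 0 := by
      simp only [hPdef, mul_sub, mul_one, mul_smul_comm]
      module
    rw [e3, add_mul, smul_mul_assoc, mul_assoc, Matrix.mul_nonsing_inv _ (hPdet t), mul_one]

theorem reverse {M M' M'' N N' : ℝ → Mat n}
    (hM : MDeriv M M') (hM' : MDeriv M' M'')
    (hMu : ∀ t, IsUnit (M' t))
    (hN : ∀ t, N t = (M' t)⁻¹ * M'' t) (hN' : MDeriv N N')
    {A B C D : Mat n} (hU : ∀ t : ℝ, IsUnit (A + t • B))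
    (hMeq : ∀ t : ℝ, M t = (C + t • D) * (A + t • B)⁻¹) :
    ∀ t, N' t - (2⁻¹ : ℝ) • (N t * N t) = 0 := by
  rw [mderiv_iff] at hM hM' hN'
  set Q : ℝ → Mat n := fun t => A + t • B with hQdef
  set G : ℝ → Mat n := fun t => (Q t)⁻¹ with hGdef
  set W : ℝ → Mat n := fun t => C + t • D with hWdef
  have hQd : ∀ t, HasDerivAt Q B t := by
    intro t
    have := (hasDerivAt_const t A).add ((hasDerivAt_id t).smul_const B)
    simp at this
    exact this
  have hGd : ∀ t, HasDerivAt G (-(G t * B * G t)) t := hasDerivAt_inv hQd hU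
  have hWd : ∀ t, HasDerivAt W D t := by
    intro t
    have := (hasDerivAt_const t C).add ((hasDerivAt_id t).smul_const D)
    simp at this
    exact this
  have hMW : M = fun t => W t * G t := funext hMeq
  have hM'eq : ∀ t, M' t = D * G t + W t * -(G t * B * G t) := by
    intro t
    have h1 : HasDerivAt (fun s => W s * G s) (D * G t + W t * -(G t * B * G t)) t :=
      (hWd t).mul (hGd t)
    have h2 := hM t
    rw [hMW] at h2
    exact h2.unique h1
  have hM'fun : M' = fun t => D * G t + W t * -(G t * B * G t) := funext hM'eq
  have hM''eq : ∀ t, M'' t =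
      D * -(G t * B * G t) +
        (D * -(G t * B * G t) +
          W t * -(-(G t * B * G t) * B * G t + G t * B * -(G t * B * G t))) := by
    intro t
    have hH : HasDerivAt (fun s => -(G s * B * G s))
        (-(-(G t * B * G t) * B * G t + G t * B * -(G t * B * G t))) t := by
      exact (((hGd t).mul_const B).mul (hGd t)).neg
    have h3 : HasDerivAt (fun s => D * G s + W s * -(G s * B * G s))
        (D * -(G t * B * G t) +
          (D * -(G t * B * G t) +
            W t * -(-(G t * B * G t) * B * G t + G t * B * -(G t * B * G t)))) t :=
      ((hGd t).const_mul D).add ((hWd t).mul hH)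
    have h2 := hM' t
    rw [hM'fun] at h2
    exact h2.unique h3
  have hMdet : ∀ t, IsUnit (M' t).det := fun t => (Matrix.isUnit_iff_isUnit_det _).mp (hMu t)
  have hkey : ∀ t, M'' t = -((2:ℝ) • (M' t * (B * G t))) := by
    intro t
    rw [hM''eq t, hM'eq t]
    simp only [mul_neg, neg_mul, neg_neg, mul_add, add_mul, neg_add, mul_assoc, smul_add,
      smul_neg, two_smul]
    abel
  have hNt : ∀ t, N t = -((2:ℝ) • (B * G t)) := by
    intro t
    rw [hN t, hkey t]
    rw [mul_neg, mul_smul_comm, ← mul_assoc, Matrix.nonsing_inv_mul _ (hMdet t), one_mul]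
  have hNfun : N = fun t => -((2:ℝ) • (B * G t)) := funext hNt
  have hN'eq : ∀ t, N' t = -((2:ℝ) • (B * -(G t * B * G t))) := by
    intro t
    have hd : HasDerivAt (fun s => -((2:ℝ) • (B * G s))) (-((2:ℝ) • (B * -(G t * B * G t)))) t :=
      (((hGd t).const_mul B).const_smul (2:ℝ)).neg
    have h2 := hN' t
    rw [hNfun] at h2
    exact h2.unique hd
  intro t
  rw [hN'eq t, hNt t]
  simp only [mul_neg, neg_neg, smul_neg, neg_mul, smul_mul_assoc, mul_smul_comm, smul_smul]
  rw [sub_eq_zero]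
  norm_num [mul_assoc]

end Stmt16Aux

/-- the matrix Schwarzian of `M(t)` (with `Ṁ(t)` invertible) vanishes
identically iff `M(t) = (C + tD)(A + tB)⁻¹` for constant matrices `A, B, C, D`. -/
theorem stmt16 {n : ℕ} (M M' M'' N N' : ℝ → Matrix (Fin n) (Fin n) ℝ)
    (hM : MDeriv M M') (hM' : MDeriv M' M'')
    (hMu : ∀ t, IsUnit (M' t))
    (hN : ∀ t, N t = (M' t)⁻¹ * M'' t) (hN' : MDeriv N N') :
    (∀ t, N' t - (2⁻¹ : ℝ) • (N t * N t) = 0) ↔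
      ∃ A B C D : Matrix (Fin n) (Fin n) ℝ,
        (∀ t : ℝ, IsUnit (A + t • B)) ∧
        ∀ t : ℝ, M t = (C + t • D) * (A + t • B)⁻¹ := by
  constructor
  · intro h
    exact Stmt16Aux.forward hM hM' hMu hN hN' fun t => sub_eq_zero.mp (h t)
  · rintro ⟨A, B, C, D, hU, hMeq⟩
    exact Stmt16Aux.reverse hM hM' hMu hN hN' hU hMeq
end
end

section
/- If W(t) denotes the Wronskian of a fanning Lagrangian frame A(t), then the matrix {A(t),t}·W(t)^{-1} is symmetric for all t, where {A(t),t} is the Schwarzian of A(t). -/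
open Matrix

noncomputable section

namespace MDeriv

variable {m k l : Type*}

lemma mulM [Fintype k] {A A' : ℝ → Matrix m k ℝ} {B B' : ℝ → Matrix k l ℝ}
    (hA : MDeriv A A') (hB : MDeriv B B') :
    MDeriv (fun t => A t * B t) (fun t => A' t * B t + A t * B' t) := by
  intro i j t
  have h : HasDerivAt (fun s => ∑ x, A s i x * B s x j)
      (∑ x, (A' t i x * B t x j + A t i x * B' t x j)) t :=
    HasDerivAt.fun_sum fun x _ => (hA i x t).fun_mul (hB x j t)
  simpa [Matrix.mul_apply, Finset.sum_add_distrib] using h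

lemma transp {A A' : ℝ → Matrix m k ℝ} (h : MDeriv A A') :
    MDeriv (fun t => (A t)ᵀ) (fun t => (A' t)ᵀ) := fun i j t => h j i t

lemma constM (C : Matrix m k ℝ) : MDeriv (fun _ => C) (fun _ => 0) := fun i j t => by
  simpa using hasDerivAt_const t (C i j)

lemma negM {F F' : ℝ → Matrix m k ℝ} (h : MDeriv F F') :
    MDeriv (fun t => -F t) (fun t => -F' t) := fun i j t => by
  simpa using (h i j t).fun_neg

lemma addM {F F' G G' : ℝ → Matrix m k ℝ} (hF : MDeriv F F') (hG : MDeriv G G') :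
    MDeriv (fun t => F t + G t) (fun t => F' t + G' t) := fun i j t => by
  simpa using (hF i j t).fun_add (hG i j t)

lemma subM {F F' G G' : ℝ → Matrix m k ℝ} (hF : MDeriv F F') (hG : MDeriv G G') :
    MDeriv (fun t => F t - G t) (fun t => F' t - G' t) := fun i j t => by
  simpa using (hF i j t).fun_sub (hG i j t)

lemma congr_deriv {F F' G : ℝ → Matrix m k ℝ} (h : MDeriv F F') (hg : ∀ t, F' t = G t) :
    MDeriv F G := fun i j t => by rw [← hg t]; exact h i j t

lemma congr_fun' {F F' G : ℝ → Matrix m k ℝ} (h : MDeriv F F') (hFG : ∀ t, G t = F t) :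
    MDeriv G F' := fun i j t => by
  have e : (fun s => G s i j) = (fun s => F s i j) := funext fun s => by rw [hFG]
  rw [e]; exact h i j t

lemma eq_zero' {F F' : ℝ → Matrix m k ℝ} (h : MDeriv F F') (h0 : ∀ t, F t = 0) :
    ∀ t, F' t = 0 := by
  intro t; ext i j
  have h1 := h i j t
  have h2 : (fun s => F s i j) = fun _ => (0:ℝ) := funext fun s => by rw [h0]; rfl
  rw [h2] at h1
  simpa using h1.unique (hasDerivAt_const t 0)

end MDeriv

/-- for a fanning Lagrangian frame `A(t)` with Wronskian
`W(t) = -A(t)ᵀ J Ȧ(t)` and Schwarzian `{A,t} = 2Q - (1/2)P² - Ṗ` (where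
`Ä + Ȧ P + A Q = 0`), the matrix `{A(t),t} W(t)⁻¹` is symmetric. -/
theorem stmt19 {n : ℕ} (A A' A'' : ℝ → Matrix (Fin n ⊕ Fin n) (Fin n) ℝ)
    (J : Matrix (Fin n ⊕ Fin n) (Fin n ⊕ Fin n) ℝ)
    (P P' Q W : ℝ → Matrix (Fin n) (Fin n) ℝ)
    (hJ : J = fromBlocks 0 (-1) 1 0)
    (hA : MDeriv A A') (hA' : MDeriv A' A'')
    (hAc : ∀ i j, Continuous fun t => A'' t i j)
    (hLag : ∀ t, (A t)ᵀ * J * A t = 0)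
    (hAf : ∀ t, IsUnit (fromCols (A t) (A' t)))
    (hPQ : ∀ t, A'' t + A' t * P t + A t * Q t = 0)
    (hP' : MDeriv P P')
    (hW : ∀ t, W t = -((A t)ᵀ * J * A' t)) :
    ∀ t, (((2 : ℝ) • Q t - (2⁻¹ : ℝ) • (P t * P t) - P' t) * (W t)⁻¹).IsSymm := by
  -- J is antisymmetric
  have hJT : Jᵀ = -J := by
    subst hJ
    ext i j
    rcases i with i | i <;> rcases j with j | j <;>
      simp [Matrix.transpose_apply, Matrix.fromBlocks, Matrix.one_apply, eq_comm]
  -- transpose trick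
  have tJ : ∀ {k l : Type} (X : Matrix (Fin n ⊕ Fin n) k ℝ) (Y : Matrix (Fin n ⊕ Fin n) l ℝ),
      (Xᵀ * J * Y)ᵀ = -(Yᵀ * J * X) := by
    intro k l X Y
    rw [Matrix.transpose_mul, Matrix.transpose_mul, Matrix.transpose_transpose, hJT]
    simp [Matrix.mul_assoc]
  -- derivative of AᵀJ
  have hAJ : MDeriv (fun t => (A t)ᵀ * J) (fun t => (A' t)ᵀ * J) :=
    (hA.transp.mulM (MDeriv.constM J)).congr_deriv fun t => by simp
  have hA'J : MDeriv (fun t => (A' t)ᵀ * J) (fun t => (A'' t)ᵀ * J) :=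
    (hA'.transp.mulM (MDeriv.constM J)).congr_deriv fun t => by simp
  -- e1 : derivative of AᵀJA = 0
  have hF1 : MDeriv (fun t => (A t)ᵀ * J * A t)
      (fun t => (A' t)ᵀ * J * A t + (A t)ᵀ * J * A' t) := hAJ.mulM hA
  have e1 : ∀ t, (A' t)ᵀ * J * A t + (A t)ᵀ * J * A' t = 0 := hF1.eq_zero' hLag
  have e1' : ∀ t, (A' t)ᵀ * J * A t = W t := by
    intro t
    rw [hW t]
    exact eq_neg_of_add_eq_zero_left (e1 t)
  have haJa' : ∀ t, (A t)ᵀ * J * A' t = -W t := by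
    intro t; simp [hW t]
  have Wsym : ∀ t, (W t)ᵀ = W t := by
    intro t
    rw [hW t, Matrix.transpose_neg, tJ, neg_neg, e1']
    exact hW t
  -- skewness of S
  have hSskew : ∀ t, ((A' t)ᵀ * J * A' t)ᵀ = -((A' t)ᵀ * J * A' t) := fun t => tJ (A' t) (A' t)
  -- second-derivative substitutions
  have ha2 : ∀ t, A'' t = -(A' t * P t + A t * Q t) := by
    intro t
    have h := hPQ t
    rw [add_assoc] at h
    exact eq_neg_of_add_eq_zero_left h
  have haJa'' : ∀ t, (A t)ᵀ * J * A'' t = W t * P t := by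
    intro t
    rw [ha2 t]
    rw [show (A t)ᵀ * J * -(A' t * P t + A t * Q t)
        = -((A t)ᵀ * J * A' t * P t + (A t)ᵀ * J * A t * Q t) by
      simp [Matrix.mul_add, Matrix.mul_assoc]]
    rw [haJa' t, hLag t]
    simp
  have ha''Ja : ∀ t, (A'' t)ᵀ * J * A t = -((P t)ᵀ * W t) := by
    intro t
    have h := tJ (A t) (A'' t)
    rw [haJa'' t] at h
    have h2 : (A'' t)ᵀ * J * A t = -((W t * P t)ᵀ) := neg_eq_iff_eq_neg.mp h.symm
    rw [h2, Matrix.transpose_mul, Wsym t]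
  have ha'Ja'' : ∀ t, (A' t)ᵀ * J * A'' t
      = -((A' t)ᵀ * J * A' t * P t) - W t * Q t := by
    intro t
    rw [ha2 t]
    rw [show (A' t)ᵀ * J * -(A' t * P t + A t * Q t)
        = -((A' t)ᵀ * J * A' t * P t + (A' t)ᵀ * J * A t * Q t) by
      simp [Matrix.mul_add, Matrix.mul_assoc]]
    rw [e1' t]
    abel
  have ha''Ja' : ∀ t, (A'' t)ᵀ * J * A' t
      = -((P t)ᵀ * ((A' t)ᵀ * J * A' t)) + (Q t)ᵀ * W t := by
    intro t
    have h := tJ (A' t) (A'' t)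
    rw [ha'Ja'' t] at h
    have h2 : (A'' t)ᵀ * J * A' t
        = -((-((A' t)ᵀ * J * A' t * P t) - W t * Q t)ᵀ) := neg_eq_iff_eq_neg.mp h.symm
    rw [h2]
    simp only [Matrix.transpose_sub, Matrix.transpose_neg, Matrix.transpose_mul,
      hSskew t, Wsym t, Matrix.mul_neg, Matrix.neg_mul, neg_neg, neg_sub]
    abel
  -- derivatives of S and W
  have hSd : MDeriv (fun t => (A' t)ᵀ * J * A' t)
      (fun t => (A'' t)ᵀ * J * A' t + (A' t)ᵀ * J * A'' t) := hA'J.mulM hA'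
  have hWd : MDeriv W (fun t => -((A' t)ᵀ * J * A' t + (A t)ᵀ * J * A'' t)) :=
    ((hAJ.mulM hA').negM).congr_fun' hW
  -- e2 : derivative of e1
  have hF2 : MDeriv (fun t => (A' t)ᵀ * J * A t + (A t)ᵀ * J * A' t)
      (fun t => ((A'' t)ᵀ * J * A t + (A' t)ᵀ * J * A' t)
        + ((A' t)ᵀ * J * A' t + (A t)ᵀ * J * A'' t)) := (hA'J.mulM hA).addM (hAJ.mulM hA')
  have e2 := hF2.eq_zero' e1
  have twoS : ∀ t, (A' t)ᵀ * J * A' t + (A' t)ᵀ * J * A' t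
      = (P t)ᵀ * W t - W t * P t := by
    intro t
    have h := e2 t
    rw [ha''Ja t, haJa'' t] at h
    have h2 : (A' t)ᵀ * J * A' t + (A' t)ᵀ * J * A' t - ((P t)ᵀ * W t - W t * P t)
        = -((P t)ᵀ * W t) + (A' t)ᵀ * J * A' t + ((A' t)ᵀ * J * A' t + W t * P t) := by
      abel
    have h3 : (A' t)ᵀ * J * A' t + (A' t)ᵀ * J * A' t - ((P t)ᵀ * W t - W t * P t) = 0 := by
      rw [h2]; exact h
    exact sub_eq_zero.mp h3
  -- e3 : derivative of twoS
  have hF3 : MDeriv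
      (fun t => ((A' t)ᵀ * J * A' t + (A' t)ᵀ * J * A' t) - (P t)ᵀ * W t + W t * P t)
      (fun t =>
        (((A'' t)ᵀ * J * A' t + (A' t)ᵀ * J * A'' t)
          + ((A'' t)ᵀ * J * A' t + (A' t)ᵀ * J * A'' t))
        - ((P' t)ᵀ * W t + (P t)ᵀ * -((A' t)ᵀ * J * A' t + (A t)ᵀ * J * A'' t))
        + (-((A' t)ᵀ * J * A' t + (A t)ᵀ * J * A'' t) * P t + W t * P' t)) :=
    ((hSd.addM hSd).subM (hP'.transp.mulM hWd)).addM (hWd.mulM hP')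
  have hF3z : ∀ t, ((A' t)ᵀ * J * A' t + (A' t)ᵀ * J * A' t) - (P t)ᵀ * W t + W t * P t
      = 0 := by
    intro t; rw [twoS t]; abel
  have e3 := hF3.eq_zero' hF3z
  -- finish pointwise
  intro t
  by_cases hu : IsUnit (W t).det
  · have h3 := e3 t
    rw [ha''Ja' t, ha'Ja'' t, haJa'' t] at h3
    have hs : (A' t)ᵀ * J * A' t = (2⁻¹ : ℝ) • ((P t)ᵀ * W t - W t * P t) := by
      rw [← twoS t]; module
    rw [hs] at h3
    have key : ((2 : ℝ) • Q t - (2⁻¹ : ℝ) • (P t * P t) - P' t)ᵀ * W t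
        = W t * ((2 : ℝ) • Q t - (2⁻¹ : ℝ) • (P t * P t) - P' t) := by
      rw [← sub_eq_zero, ← h3]
      simp only [Matrix.transpose_smul, Matrix.transpose_sub, Matrix.transpose_mul,
        Matrix.transpose_transpose, smul_mul_assoc, mul_smul_comm, sub_mul, mul_sub,
        add_mul, mul_add, Matrix.neg_mul, Matrix.mul_neg, neg_add, neg_sub, smul_sub,
        smul_add, smul_neg, Matrix.mul_assoc]
      module
    show (((2 : ℝ) • Q t - (2⁻¹ : ℝ) • (P t * P t) - P' t) * (W t)⁻¹)ᵀ = _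
    rw [Matrix.transpose_mul, Matrix.transpose_nonsing_inv, Wsym t]
    have h2 : (W t)⁻¹ * (((2 : ℝ) • Q t - (2⁻¹ : ℝ) • (P t * P t) - P' t)ᵀ * W t) * (W t)⁻¹
        = (W t)⁻¹ * (W t * ((2 : ℝ) • Q t - (2⁻¹ : ℝ) • (P t * P t) - P' t)) * (W t)⁻¹ := by
      rw [key]
    simpa [Matrix.mul_assoc, Matrix.mul_nonsing_inv_cancel_right _ _ hu,
      Matrix.nonsing_inv_mul_cancel_left _ _ hu,
      Matrix.mul_nonsing_inv _ hu, Matrix.nonsing_inv_mul _ hu] using h2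
  · rw [Matrix.nonsing_inv_apply_not_isUnit _ hu]
    simp [Matrix.IsSymm]
end
end
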